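/- arXiv:2605.21185 — 8 statements merged into one kernel-verified Lean document; each statement's English description precedes it below -/
import Mathlib

section
/- Let X and Y be finite random variables with joint distribution P_XY, where P_X(x) > 0 for all x and P_Y(y) > 0 for all y. For ε > 0 define ψ2(ε, P_XY) = max over x of E_{Y ~ P_{Y|X=x}}[max{0, 1 − exp(ε)/exp(i(x;Y))}], where i(x;y) = log(P_{XY}(x,y)/(P_X(x)P_Y(y))) is the information density. Then for all finite random variables X, Y, Z forming a Markov chain X − Y − Z (i.e., P_{XZ|Y} = P_{X|Y} × P_{Z|Y}), we have ψ2(ε, P_{Z|Y} ∘ P_XY) ≤ ψ2(ε, P_XY), where P_{Z|Y} ∘ P_XY denotes the joint distribution of (X,Z) obtained by marginalizing out Y. That is, ψ2 is closed under post-processing. -/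
open Real Finset
open scoped Classical

noncomputable section

/-- Marginal distribution of the first coordinate of a joint distribution. -/
def margX {X Y : Type} [Fintype Y] (P : X → Y → ℝ) (x : X) : ℝ := ∑ y, P x y

/-- Marginal distribution of the second coordinate of a joint distribution. -/
def margY {X Y : Type} [Fintype X] (P : X → Y → ℝ) (y : Y) : ℝ := ∑ x, P x y

/-- `P` is a joint probability distribution on `X × Y`. -/
def IsJoint {X Y : Type} [Fintype X] [Fintype Y] (P : X → Y → ℝ) : Prop :=
  (∀ x y, 0 ≤ P x y) ∧ (∑ x, ∑ y, P x y) = 1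

/-- Conditional probability `P_{Y|X=x}(y)` of the second coordinate given the first. -/
def condYX {X Y : Type} [Fintype Y] (P : X → Y → ℝ) (x : X) (y : Y) : ℝ :=
  P x y / margX P x

/-- Information density `i(x;y) = log (P_{XY}(x,y) / (P_X(x) P_Y(y)))`. -/
def infoDen {X Y : Type} [Fintype X] [Fintype Y] (P : X → Y → ℝ) (x : X) (y : Y) : ℝ :=
  Real.log (P x y / (margX P x * margY P y))

/-- `ψ₂(ε, P_XY) = max_x E_{Y ~ P_{Y|X=x}}[max {0, 1 - e^ε / e^{i(x;Y)}}]`. -/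
def psi2 {X Y : Type} [Fintype X] [Fintype Y] (P : X → Y → ℝ) (ε : ℝ) : ℝ :=
  ⨆ x, ∑ y, condYX P x y * max 0 (1 - Real.exp ε / Real.exp (infoDen P x y))

/-- `K` is a Markov kernel (a conditional distribution). -/
def IsKernel {Y Z : Type} [Fintype Z] (K : Y → Z → ℝ) : Prop :=
  (∀ y z, 0 ≤ K y z) ∧ ∀ y, (∑ z, K y z) = 1

/-- Joint distribution of `(X, Z)` obtained by post-processing `Y` with the kernel `K`
(marginalizing out `Y`); this encodes the Markov chain `X - Y - Z`. -/
def pushKernel {X Y Z : Type} [Fintype Y] (P : X → Y → ℝ) (K : Y → Z → ℝ)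
    (x : X) (z : Z) : ℝ :=
  ∑ y, P x y * K y z


/-!
Multiplied by `P_X(x)`, row `x` of `ψ₂` becomes the hockey-stick divergence
`∑_y (P_{XY}(x,y) - e^ε P_X(x) P_Y(y))⁺` of `P_{XY}(x,·)` from `e^ε P_X(x) P_Y`.
Post-processing by `K` leaves `P_X` unchanged and pushes both measures through `K`; as the
positive part is subadditive and positively homogeneous, the divergence can only decrease.
-/

lemma mul_max_zero_one_sub_div_exp_log_div {p q e : ℝ} (hp : 0 ≤ p) (hq : 0 ≤ q)
    (he : 0 ≤ e) (hpq : q = 0 → p = 0) :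
    p * max 0 (1 - e / exp (log (p / q))) = max 0 (p - e * q) := by
  rcases hp.eq_or_lt with rfl | hp
  · simp [mul_nonneg he hq]
  have hq : 0 < q := hq.lt_of_ne fun h => hp.ne' (hpq h.symm)
  rw [exp_log (div_pos hp hq), mul_comm, max_mul_of_nonneg _ _ hp.le, zero_mul]
  congr 1
  field_simp

lemma max_zero_sum_le_sum_max_zero {ι : Type*} (s : Finset ι) (f : ι → ℝ) :
    max 0 (∑ i ∈ s, f i) ≤ ∑ i ∈ s, max 0 (f i) :=
  max_le (sum_nonneg fun i _ => le_max_left 0 (f i))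
    (sum_le_sum fun i _ => le_max_right 0 (f i))

lemma sum_max_zero_sum_mul_le {Y Z : Type} [Fintype Y] [Fintype Z] {K : Y → Z → ℝ}
    (hK : IsKernel K) (a : Y → ℝ) :
    ∑ z, max 0 (∑ y, a y * K y z) ≤ ∑ y, max 0 (a y) :=
  calc ∑ z, max 0 (∑ y, a y * K y z)
      ≤ ∑ z, ∑ y, max 0 (a y * K y z) :=
        sum_le_sum fun z _ => max_zero_sum_le_sum_max_zero _ _
    _ = ∑ y, max 0 (a y) * ∑ z, K y z := by
      rw [sum_comm]
      refine sum_congr rfl fun y _ => ?_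
      rw [mul_sum]
      exact sum_congr rfl fun z _ => by rw [max_mul_of_nonneg _ _ (hK.1 y z), zero_mul]
    _ = ∑ y, max 0 (a y) := by simp only [hK.2, mul_one]

section PushKernel

variable {X Y Z : Type}

lemma le_margX [Fintype Y] {P : X → Y → ℝ} (hP : ∀ x y, 0 ≤ P x y) (x : X) (y : Y) :
    P x y ≤ margX P x :=
  single_le_sum (fun y _ => hP x y) (mem_univ y)

lemma le_margY [Fintype X] {P : X → Y → ℝ} (hP : ∀ x y, 0 ≤ P x y) (x : X) (y : Y) :
    P x y ≤ margY P y :=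
  single_le_sum (fun x _ => hP x y) (mem_univ x)

lemma pushKernel_nonneg [Fintype Y] [Fintype Z] {P : X → Y → ℝ} {K : Y → Z → ℝ}
    (hP : ∀ x y, 0 ≤ P x y) (hK : IsKernel K) (x : X) (z : Z) : 0 ≤ pushKernel P K x z :=
  sum_nonneg fun y _ => mul_nonneg (hP x y) (hK.1 y z)

lemma margX_pushKernel [Fintype Y] [Fintype Z] (P : X → Y → ℝ) {K : Y → Z → ℝ}
    (hK : IsKernel K) (x : X) :
    margX (pushKernel P K) x = margX P x := by
  simp only [margX, pushKernel]
  rw [sum_comm]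
  simp only [← mul_sum, hK.2, mul_one]

lemma margY_pushKernel [Fintype X] [Fintype Y] (P : X → Y → ℝ) (K : Y → Z → ℝ) (z : Z) :
    margY (pushKernel P K) z = ∑ y, margY P y * K y z := by
  simp only [margY, pushKernel, sum_mul]
  exact sum_comm

lemma psi2_eq_iSup [Fintype X] [Fintype Y] {P : X → Y → ℝ} (hP : ∀ x y, 0 ≤ P x y)
    (ε : ℝ) :
    psi2 P ε = ⨆ x, (∑ y, max 0 (P x y - exp ε * (margX P x * margY P y))) / margX P x := by
  simp only [psi2, sum_div]
  congr 1; ext x; congr 1; ext y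
  have hmarg : margX P x * margY P y = 0 → P x y = 0 := fun h => by
    rcases mul_eq_zero.1 h with h | h
    · exact le_antisymm (h ▸ le_margX hP x y) (hP x y)
    · exact le_antisymm (h ▸ le_margY hP x y) (hP x y)
  rw [condYX, infoDen, div_mul_eq_mul_div, mul_max_zero_one_sub_div_exp_log_div (hP x y)
    (mul_nonneg ((hP x y).trans (le_margX hP x y)) ((hP x y).trans (le_margY hP x y)))
    (exp_pos ε).le hmarg]

end PushKernel

theorem psi2_closed_under_post_processing_general
    {X Y Z : Type} [Fintype X] [Fintype Y] [Fintype Z]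
    (P : X → Y → ℝ) (hP : IsJoint P)
    (K : Y → Z → ℝ) (hK : IsKernel K)
    (ε : ℝ) :
    psi2 (pushKernel P K) ε ≤ psi2 P ε := by
  rw [psi2_eq_iSup (pushKernel_nonneg hP.1 hK), psi2_eq_iSup hP.1]
  refine Finite.ciSup_mono fun x => ?_
  rw [margX_pushKernel P hK]
  refine div_le_div_of_nonneg_right ?_ (sum_nonneg fun y _ => hP.1 x y)
  have hpush : ∀ z, pushKernel P K x z - exp ε * (margX P x * margY (pushKernel P K) z) =
      ∑ y, (P x y - exp ε * (margX P x * margY P y)) * K y z := fun z => by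
    simp only [pushKernel, margY_pushKernel, mul_sum, ← sum_sub_distrib]
    exact sum_congr rfl fun y _ => by ring
  simpa only [hpush] using sum_max_zero_sum_mul_le hK _

/-- `ψ₂` is closed under post-processing: for finite random variables
`X, Y, Z` forming a Markov chain `X - Y - Z` (so that the joint distribution of `(X, Z)`
is obtained by marginalizing `Y` out through the kernel `P_{Z|Y}`),
`ψ₂(ε, P_{Z|Y} ∘ P_XY) ≤ ψ₂(ε, P_XY)`. -/
theorem psi2_closed_under_post_processing
    {X Y Z : Type} [Fintype X] [Fintype Y] [Fintype Z]
    (P : X → Y → ℝ) (hP : IsJoint P)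
    (hPX : ∀ x, 0 < margX P x) (hPY : ∀ y, 0 < margY P y)
    (K : Y → Z → ℝ) (hK : IsKernel K)
    (ε : ℝ) (hε : 0 < ε) :
    psi2 (pushKernel P K) ε ≤ psi2 P ε :=
  psi2_closed_under_post_processing_general P hP K hK ε
end
end

section
/- For ε > 0 define ψ1(ε, P_XY) = E_{Y ~ P_Y}[max{0, 1 − exp(ε)/exp(ℓ(Y))}], where ℓ(y) = log max_x P_{Y|X=x}(y)/P_Y(y) is the pointwise maximal leakage of outcome y. Then there exist finite random variables X, Y, Z forming a Markov chain X − Y − Z and an ε > 0 such that ψ1(ε, P_{Z|Y} ∘ P_XY) > ψ1(ε, P_XY); i.e., ψ1 is not closed under post-processing. Concretely, one may take X uniform on {1,2,3,4}, the mechanism P_{Y|X} with rows (0,0,0.5,0.5), (0,0,0.5,0.5), (0,0.2,0.4,0.4), (0.2,0,0.4,0.4), Z = h(Y) with h mapping {1,3} to 1 and {2,4} to 2, and ε = log(10/9), in which case ψ1(ε, P_XY) = 13/180 < 2/27 = ψ1(ε, P_XZ). -/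
open Real Finset
open scoped Classical

noncomputable section

/-- Pointwise maximal leakage of the outcome `y`:
`ℓ(X → y) = log (max_x P_{Y|X=x}(y) / P_Y(y))`. -/
def pml {X Y : Type} [Fintype X] [Fintype Y] (P : X → Y → ℝ) (y : Y) : ℝ :=
  Real.log ((⨆ x, condYX P x y) / margY P y)

/-- `ψ₁(ε, P_XY) = E_{Y ~ P_Y}[max {0, 1 - e^ε / e^{ℓ(Y)}}]`. -/
def psi1 {X Y : Type} [Fintype X] [Fintype Y] (P : X → Y → ℝ) (ε : ℝ) : ℝ :=
  ∑ y, margY P y * max 0 (1 - Real.exp ε / Real.exp (pml P y))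

/-- The mechanism `P_{Y|X}` of the counterexample, with rows
`(0,0,0.5,0.5), (0,0,0.5,0.5), (0,0.2,0.4,0.4), (0.2,0,0.4,0.4)`. -/
def mech4 : Fin 4 → Fin 4 → ℝ :=
  ![![0, 0, 0.5, 0.5], ![0, 0, 0.5, 0.5], ![0, 0.2, 0.4, 0.4], ![0.2, 0, 0.4, 0.4]]

/-- The joint distribution of `(X, Y)` with `X` uniform on a four-element set and the
mechanism `mech4`. -/
def PXY4 : Fin 4 → Fin 4 → ℝ := fun x y => (1 / 4 : ℝ) * mech4 x y

/-- The deterministic post-processing `Z = h(Y)` with `h` mapping `{1,3}` to `1` and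
`{2,4}` to `2` (here in `0`-indexed form), written as a kernel. -/
def postK : Fin 4 → Fin 2 → ℝ := ![![1, 0], ![0, 1], ![1, 0], ![0, 1]]

/-! With `X` uniform and rows of the mechanism `W` summing to one, `P_{Y|X=x}(y) = W x y`, so
`e^{ℓ(X → y)} = max_x W x y / P_Y(y)` and `ψ₁` becomes the explicit finite sum
`∑_y P_Y(y) · max {0, 1 - e^ε P_Y(y) / max_x W x y}`.
For `Y` only the two rare outcomes (probability `1/20`, maximal likelihood `1/5`) contribute:
the two frequent ones have leakage exactly `log (10/9) = ε`. Merging each rare outcome with a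
frequent one gives two outcomes of probability `1/2` and maximal likelihood `3/5`, whose leakage
`log (6/5)` exceeds `ε`, so both contribute and the total grows. -/

section ConstantInput

variable {X Y : Type} {c : ℝ} {W : X → Y → ℝ}

theorem psi1_eq_sum_of_pos [Fintype X] [Fintype Y] (P : X → Y → ℝ) (ε : ℝ)
    (hpos : ∀ y, 0 < (⨆ x, condYX P x y) / margY P y) :
    psi1 P ε = ∑ y, margY P y * max 0 (1 - exp ε * margY P y / ⨆ x, condYX P x y) := by
  refine sum_congr rfl fun y _ => ?_
  rw [pml, exp_log (hpos y), div_div_eq_mul_div]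

theorem isJoint_const_mul [Fintype X] [Fintype Y] (hc : 0 ≤ c) (hW₀ : ∀ x y, 0 ≤ W x y)
    (hW : ∀ x, ∑ y, W x y = 1) (hcard : Fintype.card X * c = 1) :
    IsJoint fun x y => c * W x y :=
  ⟨fun x y => mul_nonneg hc (hW₀ x y), by simp [← mul_sum, hW, hcard]⟩

theorem margX_const_mul [Fintype Y] (hW : ∀ x, ∑ y, W x y = 1) (x : X) :
    margX (fun x y => c * W x y) x = c := by
  simp [margX, ← mul_sum, hW]

theorem margY_const_mul [Fintype X] (y : Y) :
    margY (fun x y => c * W x y) y = c * ∑ x, W x y :=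
  (mul_sum _ _ _).symm

theorem condYX_const_mul [Fintype Y] (hc : c ≠ 0) (hW : ∀ x, ∑ y, W x y = 1) (x : X) (y : Y) :
    condYX (fun x y => c * W x y) x y = W x y := by
  rw [condYX, margX_const_mul hW, mul_div_cancel_left₀ _ hc]

theorem psi1_const_mul [Fintype X] [Fintype Y] (hc : 0 < c) (hW : ∀ x, ∑ y, W x y = 1)
    (hcol : ∀ y, 0 < ∑ x, W x y) (hmax : ∀ y, 0 < ⨆ x, W x y) (ε : ℝ) :
    psi1 (fun x y => c * W x y) ε =
      ∑ y, c * (∑ x, W x y) * max 0 (1 - exp ε * (c * ∑ x, W x y) / ⨆ x, W x y) := by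
  have hcond : ∀ y, (⨆ x, condYX (fun x y => c * W x y) x y) = ⨆ x, W x y := fun y =>
    iSup_congr (condYX_const_mul hc.ne' hW · y)
  rw [psi1_eq_sum_of_pos]
  · simp only [hcond, margY_const_mul]
  · intro y
    rw [hcond, margY_const_mul]
    exact div_pos (hmax y) (mul_pos hc (hcol y))

end ConstantInput

theorem mech4_nonneg (x y : Fin 4) : 0 ≤ mech4 x y := by
  fin_cases x <;> fin_cases y <;> simp [mech4] <;> norm_num

theorem mech4_row_sum (x : Fin 4) : ∑ y, mech4 x y = 1 := by
  fin_cases x <;> simp [Fin.sum_univ_four, mech4] <;> norm_num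

theorem mech4_col_sum (y : Fin 4) : ∑ x, mech4 x y = ![1 / 5, 1 / 5, 9 / 5, 9 / 5] y := by
  fin_cases y <;> simp [Fin.sum_univ_four, mech4] <;> norm_num

theorem mech4_col_max (y : Fin 4) : (⨆ x, mech4 x y) = ![1 / 5, 1 / 5, 1 / 2, 1 / 2] y := by
  rw [← sup'_univ_eq_ciSup]
  fin_cases y <;> simp [Fin.univ_succ, mech4] <;> norm_num

theorem isKernel_postK : IsKernel postK :=
  ⟨by intro y z; fin_cases y <;> fin_cases z <;> simp [postK],
   by intro y; fin_cases y <;> simp [postK]⟩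

def mechZ : Fin 4 → Fin 2 → ℝ := ![![1 / 2, 1 / 2], ![1 / 2, 1 / 2], ![2 / 5, 3 / 5], ![3 / 5, 2 / 5]]

theorem pushKernel_PXY4_postK : pushKernel PXY4 postK = fun x z => 1 / 4 * mechZ x z := by
  funext x z
  fin_cases x <;> fin_cases z <;>
    simp [pushKernel, PXY4, Fin.sum_univ_four, mech4, postK, mechZ] <;> norm_num

theorem mechZ_row_sum (x : Fin 4) : ∑ z, mechZ x z = 1 := by
  fin_cases x <;> simp [mechZ] <;> norm_num

theorem mechZ_col_sum (z : Fin 2) : ∑ x, mechZ x z = 2 := by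
  fin_cases z <;> simp [Fin.sum_univ_four, mechZ] <;> norm_num

theorem mechZ_col_max (z : Fin 2) : (⨆ x, mechZ x z) = 3 / 5 := by
  rw [← sup'_univ_eq_ciSup]
  fin_cases z <;> simp [Fin.univ_succ, mechZ] <;> norm_num

/-- `ψ₁` is not closed under post-processing: for `X` uniform on a
four-element set, the mechanism `mech4`, the post-processing kernel `postK`, and
`ε = log (10/9)`, one has `ψ₁(ε, P_XY) = 13/180 < 2/27 = ψ₁(ε, P_XZ)`. -/
theorem psi1_not_closed_under_post_processing :
    IsJoint PXY4 ∧ IsKernel postK ∧ (0 : ℝ) < Real.log (10 / 9) ∧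
    psi1 PXY4 (Real.log (10 / 9)) = 13 / 180 ∧
    psi1 (pushKernel PXY4 postK) (Real.log (10 / 9)) = 2 / 27 ∧
    psi1 PXY4 (Real.log (10 / 9)) < psi1 (pushKernel PXY4 postK) (Real.log (10 / 9)) := by
  have hε : exp (log (10 / 9)) = 10 / 9 := exp_log (by norm_num)
  have hY : psi1 PXY4 (log (10 / 9)) = 13 / 180 := by
    rw [show PXY4 = fun x y => 1 / 4 * mech4 x y from rfl,
      psi1_const_mul (by norm_num) mech4_row_sum
      (fun y => by rw [mech4_col_sum]; fin_cases y <;> norm_num)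
      (fun y => by rw [mech4_col_max]; fin_cases y <;> norm_num)]
    simp only [mech4_col_sum, mech4_col_max, hε]
    rw [Fin.sum_univ_four]
    simp only [Matrix.cons_val, Matrix.cons_val_three]
    norm_num
  have hZ : psi1 (pushKernel PXY4 postK) (log (10 / 9)) = 2 / 27 := by
    rw [pushKernel_PXY4_postK, psi1_const_mul (by norm_num) mechZ_row_sum
      (fun z => by rw [mechZ_col_sum]; norm_num) (fun z => by rw [mechZ_col_max]; norm_num)]
    simp only [mechZ_col_sum, mechZ_col_max, hε]
    rw [Fin.sum_univ_two]
    norm_num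
  refine ⟨isJoint_const_mul (by norm_num) mech4_nonneg mech4_row_sum (by norm_num),
    isKernel_postK, log_pos (by norm_num), hY, hZ, ?_⟩
  rw [hY, hZ]
  norm_num
end
end

section
/- Let X and Y be finite random variables with joint distribution P_XY, where P_X(x) > 0 for all x and P_Y(y) > 0 for all y. For ε > 0, the quantity ψ2(ε, P_XY) = max over x of E_{Y ~ P_{Y|X=x}}[max{0, 1 − exp(ε)/exp(i(x;Y))}] equals max over x ∈ 𝒳 and over subsets 𝓔 ⊆ 𝒴 of the difference P_{Y|X=x}(𝓔) − e^ε P_Y(𝓔), where i(x;y) = log(P_{XY}(x,y)/(P_X(x)P_Y(y))). -/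
open Real Finset
open scoped Classical

noncomputable section

/-- The quantity `ψ₂(ε, P_XY)` equals the maximum over `x ∈ 𝒳` and
subsets `𝓔 ⊆ 𝒴` of `P_{Y|X=x}(𝓔) - e^ε P_Y(𝓔)`. -/
theorem psi2_eq_event_formulation
    {X Y : Type} [Fintype X] [Fintype Y]
    (P : X → Y → ℝ) (hP : IsJoint P)
    (hPX : ∀ x, 0 < margX P x) (hPY : ∀ y, 0 < margY P y)
    (ε : ℝ) (hε : 0 < ε) :
    psi2 P ε =
      ⨆ x, ⨆ E : Finset Y,
        ((∑ y ∈ E, condYX P x y) - Real.exp ε * ∑ y ∈ E, margY P y) := by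
  unfold psi2
  apply iSup_congr
  intro x
  set a : Y → ℝ := fun y => condYX P x y - Real.exp ε * margY P y with ha
  have key : ∀ y, condYX P x y * max 0 (1 - Real.exp ε / Real.exp (infoDen P x y))
      = max 0 (a y) := by
    intro y
    by_cases h : P x y = 0
    · have hc : condYX P x y = 0 := by simp [condYX, h]
      have : a y ≤ 0 := by
        simp only [ha, hc]
        have := (hPY y); nlinarith [Real.exp_pos ε]
      simp [hc, max_eq_left this]
    · have hpos : 0 < P x y := lt_of_le_of_ne (hP.1 x y) (Ne.symm h)
      have hr : 0 < P x y / (margX P x * margY P y) := by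
        have := hPX x; have := hPY y; positivity
      have hexp : Real.exp (infoDen P x y) = P x y / (margX P x * margY P y) :=
        Real.exp_log hr
      have hc : 0 < condYX P x y := div_pos hpos (hPX x)
      have hmul : condYX P x y * (1 - Real.exp ε / (P x y / (margX P x * margY P y)))
          = a y := by
        have hx := (hPX x).ne'
        have hy := (hPY y).ne'
        simp only [ha, condYX]
        field_simp
      rw [hexp, mul_max_of_nonneg _ _ hc.le, mul_zero, hmul]
  simp only [key]
  have hsum : ∀ E : Finset Y,
      ((∑ y ∈ E, condYX P x y) - Real.exp ε * ∑ y ∈ E, margY P y) = ∑ y ∈ E, a y := by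
    intro E
    rw [Finset.mul_sum, ← Finset.sum_sub_distrib]
  have hbdd : BddAbove (Set.range fun E : Finset Y =>
      ((∑ y ∈ E, condYX P x y) - Real.exp ε * ∑ y ∈ E, margY P y)) :=
    (Set.finite_range _).bddAbove
  apply le_antisymm
  · have hEq : (∑ y, max 0 (a y)) = ∑ y ∈ Finset.univ.filter (fun y => 0 < a y), a y := by
      rw [Finset.sum_filter]
      apply Finset.sum_congr rfl
      intro y _
      by_cases hy : 0 < a y
      · simp [hy, max_eq_right hy.le]
      · simp [hy, max_eq_left (not_lt.mp hy)]
    rw [hEq, ← hsum]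
    exact le_ciSup hbdd _
  · apply ciSup_le
    intro E
    rw [hsum]
    calc ∑ y ∈ E, a y ≤ ∑ y ∈ E, max 0 (a y) :=
          Finset.sum_le_sum fun y _ => le_max_right _ _
      _ ≤ ∑ y, max 0 (a y) :=
          Finset.sum_le_sum_of_subset_of_nonneg (Finset.subset_univ E)
            (fun y _ _ => le_max_left _ _)
end
end

section
/- Let X, Y, Z be finite random variables forming a Markov chain X − Y − Z, with P_X(x) > 0 for all x and P_Y(y) > 0 for all y. Then for every ε > 0, every x ∈ 𝒳, and every subset 𝓐 ⊆ 𝒵, it holds that P_{Z|X=x}(𝓐) − e^ε P_Z(𝓐) ≤ ψ2(ε, P_XY), where ψ2(ε, P_XY) = max over x' of E_{Y ~ P_{Y|X=x'}}[max{0, 1 − exp(ε)/exp(i(x';Y))}]. -/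
open Real Finset
open scoped Classical

noncomputable section

/-- For finite random variables `X, Y, Z` forming a Markov chain
`X - Y - Z` (encoded by the kernel `K = P_{Z|Y}`), for every `ε > 0`, every `x ∈ 𝒳` and
every subset `𝓐 ⊆ 𝒵`, one has `P_{Z|X=x}(𝓐) - e^ε P_Z(𝓐) ≤ ψ₂(ε, P_XY)`. -/
theorem event_gap_le_psi2
    {X Y Z : Type} [Fintype X] [Fintype Y] [Fintype Z]
    (P : X → Y → ℝ) (hP : IsJoint P)
    (hPX : ∀ x, 0 < margX P x) (hPY : ∀ y, 0 < margY P y)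
    (K : Y → Z → ℝ) (hK : IsKernel K)
    (ε : ℝ) (hε : 0 < ε) (x : X) (A : Finset Z) :
    (∑ z ∈ A, condYX (pushKernel P K) x z)
      - Real.exp ε * (∑ z ∈ A, margY (pushKernel P K) z) ≤ psi2 P ε := by
  obtain ⟨hPnn, hPsum⟩ := hP
  obtain ⟨hKnn, hKsum⟩ := hK
  have hmx : margX (pushKernel P K) x = margX P x := by
    unfold margX pushKernel
    rw [Finset.sum_comm]
    refine Finset.sum_congr rfl fun y _ => ?_
    rw [← Finset.mul_sum, hKsum y, mul_one]
  have hmy : ∀ z, margY (pushKernel P K) z = ∑ y, margY P y * K y z := by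
    intro z
    unfold margY pushKernel
    rw [Finset.sum_comm]
    exact Finset.sum_congr rfl fun y _ => by rw [Finset.sum_mul]
  have hlhs : (∑ z ∈ A, condYX (pushKernel P K) x z)
      - Real.exp ε * (∑ z ∈ A, margY (pushKernel P K) z)
      = ∑ y, (∑ z ∈ A, K y z) * (condYX P x y - Real.exp ε * margY P y) := by
    have h1 : ∑ z ∈ A, condYX (pushKernel P K) x z
        = ∑ y, (∑ z ∈ A, K y z) * condYX P x y := by
      unfold condYX
      rw [hmx]
      simp only [pushKernel]
      simp only [Finset.sum_div]
      rw [Finset.sum_comm]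
      refine Finset.sum_congr rfl fun y _ => ?_
      rw [Finset.sum_mul]
      refine Finset.sum_congr rfl fun z _ => ?_
      field_simp
    have h2 : Real.exp ε * (∑ z ∈ A, margY (pushKernel P K) z)
        = ∑ y, (∑ z ∈ A, K y z) * (Real.exp ε * margY P y) := by
      simp only [hmy]
      rw [Finset.sum_comm, Finset.mul_sum]
      refine Finset.sum_congr rfl fun y _ => ?_
      rw [Finset.mul_sum, Finset.sum_mul]
      refine Finset.sum_congr rfl fun z _ => by ring
    rw [h1, h2, ← Finset.sum_sub_distrib]
    exact Finset.sum_congr rfl fun y _ => by ring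
  rw [hlhs]
  have hstep : ∑ y, (∑ z ∈ A, K y z) * (condYX P x y - Real.exp ε * margY P y)
      ≤ ∑ y, condYX P x y * max 0 (1 - Real.exp ε / Real.exp (infoDen P x y)) := by
    refine Finset.sum_le_sum fun y _ => ?_
    have hc0 : 0 ≤ ∑ z ∈ A, K y z := Finset.sum_nonneg fun z _ => hKnn y z
    have hc1 : ∑ z ∈ A, K y z ≤ 1 := by
      rw [← hKsum y]
      exact Finset.sum_le_sum_of_subset_of_nonneg (A.subset_univ) fun z _ _ => hKnn y z
    set t := condYX P x y - Real.exp ε * margY P y with ht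
    have hle : (∑ z ∈ A, K y z) * t ≤ max 0 t := by
      rcases le_or_gt t 0 with h | h
      · exact le_trans (mul_nonpos_of_nonneg_of_nonpos hc0 h) (le_max_left _ _)
      · calc (∑ z ∈ A, K y z) * t ≤ 1 * t := by
              exact mul_le_mul_of_nonneg_right hc1 h.le
          _ = t := one_mul t
          _ ≤ max 0 t := le_max_right _ _
    refine hle.trans (le_of_eq ?_)
    rcases eq_or_lt_of_le (hPnn x y) with h0 | hpos
    · have hcond : condYX P x y = 0 := by
        unfold condYX; rw [← h0]; simp
      rw [hcond, zero_mul, ht, hcond]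
      have : Real.exp ε * margY P y > 0 := mul_pos (Real.exp_pos ε) (hPY y)
      rw [max_eq_left (by linarith)]
    · have hmxp := hPX x
      have hmyp := hPY y
      have hexp : Real.exp (infoDen P x y) = P x y / (margX P x * margY P y) := by
        unfold infoDen
        exact Real.exp_log (div_pos hpos (mul_pos hmxp hmyp))
      have hcondpos : 0 < condYX P x y := div_pos hpos hmxp
      rw [hexp, ht]
      have key : Real.exp ε / (P x y / (margX P x * margY P y))
          = Real.exp ε * margY P y / condYX P x y := by
        unfold condYX
        field_simp
      rw [key]
      rcases le_or_gt (condYX P x y - Real.exp ε * margY P y) 0 with h | h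
      · rw [max_eq_left h, max_eq_left, mul_zero]
        have : 1 ≤ Real.exp ε * margY P y / condYX P x y := by
          rw [le_div_iff₀ hcondpos]; linarith
        linarith
      · rw [max_eq_right h.le, max_eq_right]
        · field_simp
        · have : Real.exp ε * margY P y / condYX P x y ≤ 1 := by
            rw [div_le_one hcondpos]; linarith
          linarith
  refine hstep.trans ?_
  unfold psi2
  exact le_ciSup (Set.Finite.bddAbove (Set.finite_range
    (fun x => ∑ y, condYX P x y * max 0 (1 - Real.exp ε / Real.exp (infoDen P x y))))) x
end
end

section
/- Let X and Y be finite random variables with joint distribution P_XY, where P_X(x) > 0 for all x and P_Y(y) > 0 for all y. For a finite random variable Z with X − Y − Z, let ℓ(z) = log max_x P_{Z|X=x}(z)/P_Z(z), and define ubar ε_Z(δ) = inf{t ≥ 0 : P(ℓ(Z) ≤ t) ≥ 1 − δ} and bar ε_Z(δ) = sup{t ≥ 0 : P(ℓ(Z) ≤ t) ≤ 1 − δ}. Then for all δ ∈ (0,1): sup over all finite Z with X − Y − Z of ubar ε_Z(δ) equals sup over all finite Z with X − Y − Z of bar ε_Z(δ); i.e., the PML envelope ε_c(δ) may equivalently be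 defined using either quantile of the leakage random variable. -/
open Real Finset
open scoped Classical

noncomputable section

/-- Left-continuous quantile of the leakage random variable:
`ubar ε_Z(δ) = inf {t ≥ 0 : ℙ(ℓ(Z) ≤ t) ≥ 1 - δ}`. -/
def ubarEps {X Z : Type} [Fintype X] [Fintype Z] (Q : X → Z → ℝ) (δ : ℝ) : ℝ :=
  sInf {t : ℝ | 0 ≤ t ∧
    1 - δ ≤ ∑ z ∈ Finset.univ.filter (fun z => pml Q z ≤ t), margY Q z}

/-- The PML envelope: the supremum of the left-continuous leakage quantile over all
finite post-processings `Z` of `Y` (i.e., over all Markov chains `X - Y - Z`). -/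
def pmlEnvelope {X Y : Type} [Fintype X] [Fintype Y] (P : X → Y → ℝ) (δ : ℝ) : ℝ :=
  sSup {e : ℝ | ∃ (n : ℕ) (K : Y → Fin n → ℝ),
    IsKernel K ∧ e = ubarEps (pushKernel P K) δ}

/-- Right-continuous quantile of the leakage random variable:
`bar ε_Z(δ) = sup {t ≥ 0 : ℙ(ℓ(Z) ≤ t) ≤ 1 - δ}`. -/
def barEps {X Z : Type} [Fintype X] [Fintype Z] (Q : X → Z → ℝ) (δ : ℝ) : ℝ :=
  sSup {t : ℝ | 0 ≤ t ∧
    (∑ z ∈ Finset.univ.filter (fun z => pml Q z ≤ t), margY Q z) ≤ 1 - δ}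

set_option linter.unusedSectionVars false
set_option linter.unusedVariables false

/-- CDF of the leakage random variable. -/
def cdfF {X Z : Type} [Fintype X] [Fintype Z] (Q : X → Z → ℝ) (t : ℝ) : ℝ :=
  ∑ z ∈ Finset.univ.filter (fun z => pml Q z ≤ t), margY Q z

section Helpers
variable {X Y Z : Type} [Fintype X] [Fintype Y] [Fintype Z]

lemma ubarEps_def (Q : X → Z → ℝ) (δ : ℝ) :
    ubarEps Q δ = sInf {t : ℝ | 0 ≤ t ∧ 1 - δ ≤ cdfF Q t} := rfl

lemma barEps_def (Q : X → Z → ℝ) (δ : ℝ) :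
    barEps Q δ = sSup {t : ℝ | 0 ≤ t ∧ cdfF Q t ≤ 1 - δ} := rfl

lemma push_nn (P : X → Y → ℝ) (K : Y → Z → ℝ) (hP : ∀ x y, 0 ≤ P x y)
    (hK : ∀ y z, 0 ≤ K y z) (x : X) (z : Z) : 0 ≤ pushKernel P K x z :=
  Finset.sum_nonneg fun y _ => mul_nonneg (hP x y) (hK y z)

lemma margX_push (P : X → Y → ℝ) (K : Y → Z → ℝ) (hK : IsKernel K) (x : X) :
    margX (pushKernel P K) x = margX P x := by
  unfold margX pushKernel
  rw [Finset.sum_comm]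
  simp only [← Finset.mul_sum, hK.2, mul_one]

lemma margY_push_nn (P : X → Y → ℝ) (K : Y → Z → ℝ) (hP : ∀ x y, 0 ≤ P x y)
    (hK : ∀ y z, 0 ≤ K y z) (z : Z) : 0 ≤ margY (pushKernel P K) z :=
  Finset.sum_nonneg fun x _ => push_nn P K hP hK x z

lemma le_margY_push (P : X → Y → ℝ) (K : Y → Z → ℝ) (hP : ∀ x y, 0 ≤ P x y)
    (hK : ∀ y z, 0 ≤ K y z) (x : X) (z : Z) :
    pushKernel P K x z ≤ margY (pushKernel P K) z :=
  Finset.single_le_sum (fun x' _ => push_nn P K hP hK x' z) (Finset.mem_univ x)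

lemma sum_margY_push (P : X → Y → ℝ) (K : Y → Z → ℝ) (hP : IsJoint P) (hK : IsKernel K) :
    ∑ z, margY (pushKernel P K) z = 1 := by
  unfold margY pushKernel
  rw [Finset.sum_comm]
  have : ∀ x, ∑ z, ∑ y, P x y * K y z = ∑ y, P x y := by
    intro x
    rw [Finset.sum_comm]
    simp only [← Finset.mul_sum, hK.2, mul_one]
  simp only [this]
  exact hP.2

variable {X Y Z : Type} [Fintype X] [Fintype Y] [Fintype Z]

/-- helper: log monotone allowing zero on the left. -/
lemma log_le_log_of_le_of_one_le {a b : ℝ} (ha : 0 ≤ a) (hab : a ≤ b) (hb : 1 ≤ b) :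
    Real.log a ≤ Real.log b := by
  rcases eq_or_lt_of_le ha with h | h
  · rw [← h, Real.log_zero]
    exact Real.log_nonneg hb
  · exact Real.log_le_log h hab

lemma pml_push_le (P : X → Y → ℝ) (K : Y → Z → ℝ) (hP : IsJoint P) (hK : IsKernel K)
    {c : ℝ} (hc : 0 < c) (hc1 : c ≤ 1) (hcm : ∀ x, c ≤ margX P x) (z : Z) :
    pml (pushKernel P K) z ≤ Real.log (1 / c) := by
  set Q := pushKernel P K with hQ
  have hQ0 : ∀ x z, 0 ≤ Q x z := push_nn P K hP.1 hK.1
  have hmX : ∀ x, margX Q x = margX P x := margX_push P K hK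
  have hb1 : (1 : ℝ) ≤ 1 / c := by rw [le_div_iff₀ hc]; linarith
  have hS0 : 0 ≤ ⨆ x, condYX Q x z := by
    apply Real.iSup_nonneg
    intro x
    exact div_nonneg (hQ0 x z) (by rw [hmX]; exact le_of_lt (lt_of_lt_of_le hc (hcm x)))
  have hm0 : 0 ≤ margY Q z := margY_push_nn P K hP.1 hK.1 z
  unfold pml
  rcases eq_or_lt_of_le hm0 with h | h
  · rw [← h, div_zero, Real.log_zero]
    exact Real.log_nonneg hb1
  · apply log_le_log_of_le_of_one_le (div_nonneg hS0 hm0) _ hb1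
    rw [div_le_div_iff₀ h hc]
    calc (⨆ x, condYX Q x z) * c ≤ (margY Q z / c) * c := by
          apply mul_le_mul_of_nonneg_right _ hc.le
          apply Real.iSup_le _ (div_nonneg h.le hc.le)
          intro x
          unfold condYX
          rw [hmX]
          apply div_le_div₀ h.le (le_margY_push P K hP.1 hK.1 x z) hc (hcm x)
      _ = margY Q z := div_mul_cancel₀ _ (ne_of_gt hc)
      _ ≤ 1 * margY Q z := by linarith

lemma cdfF_mono (Q : X → Z → ℝ) (h0 : ∀ z, 0 ≤ margY Q z) {s t : ℝ} (hst : s ≤ t) :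
    cdfF Q s ≤ cdfF Q t := by
  apply Finset.sum_le_sum_of_subset_of_nonneg
  · intro z hz
    simp only [Finset.mem_filter] at *
    exact ⟨hz.1, le_trans hz.2 hst⟩
  · intro z _ _
    exact h0 z

lemma cdfF_top (Q : X → Z → ℝ) {B : ℝ} (hB : ∀ z, pml Q z ≤ B)
    (htot : ∑ z, margY Q z = 1) : cdfF Q B = 1 := by
  unfold cdfF
  rw [Finset.filter_true_of_mem (fun z _ => hB z)]
  exact htot

/-- If the CDF is strictly below `1 - δ` on `[0, t)`, then `t ≤ ubarEps`. -/
lemma le_ubarEps (Q : X → Z → ℝ) {δ t B : ℝ} (ht : 0 ≤ t)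
    (hB : ∀ z, pml Q z ≤ B) (hB0 : 0 ≤ B) (htot : ∑ z, margY Q z = 1) (hδ : 0 < δ)
    (h : ∀ s, 0 ≤ s → s < t → cdfF Q s < 1 - δ) : t ≤ ubarEps Q δ := by
  rw [ubarEps_def]
  apply le_csInf
  · exact ⟨B, hB0, by rw [cdfF_top Q hB htot]; linarith⟩
  · intro s hs
    by_contra hlt
    push_neg at hlt
    exact absurd hs.2 (not_le.mpr (h s hs.1 hlt))

lemma ubarEps_nonneg (Q : X → Z → ℝ) (δ : ℝ) : 0 ≤ ubarEps Q δ := by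
  rw [ubarEps_def]
  rcases Set.eq_empty_or_nonempty {t : ℝ | 0 ≤ t ∧ 1 - δ ≤ cdfF Q t} with h | h
  · rw [h, Real.sInf_empty]
  · exact le_csInf h (fun t ht => ht.1)

lemma ubarEps_le (Q : X → Z → ℝ) {δ B : ℝ} (hB : ∀ z, pml Q z ≤ B) (hB0 : 0 ≤ B)
    (htot : ∑ z, margY Q z = 1) (hδ : 0 < δ) : ubarEps Q δ ≤ B := by
  rw [ubarEps_def]
  apply csInf_le ⟨0, fun t ht => ht.1⟩
  exact ⟨hB0, by rw [cdfF_top Q hB htot]; linarith⟩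

lemma barEps_bddAbove (Q : X → Z → ℝ) {δ B : ℝ} (h0 : ∀ z, 0 ≤ margY Q z)
    (hB : ∀ z, pml Q z ≤ B) (htot : ∑ z, margY Q z = 1) (hδ : 0 < δ) :
    ∀ t ∈ {t : ℝ | 0 ≤ t ∧ cdfF Q t ≤ 1 - δ}, t ≤ B := by
  intro t ht
  by_contra hgt
  push_neg at hgt
  have h1 : (1 : ℝ) ≤ cdfF Q t := by
    rw [← cdfF_top Q hB htot]
    exact cdfF_mono Q h0 hgt.le
  linarith [ht.2]

lemma barEps_nonneg (Q : X → Z → ℝ) (δ : ℝ) : 0 ≤ barEps Q δ := by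
  rw [barEps_def]
  exact Real.sSup_nonneg (fun t ht => ht.1)

lemma barEps_le (Q : X → Z → ℝ) {δ B : ℝ} (h0 : ∀ z, 0 ≤ margY Q z) (hB0 : 0 ≤ B)
    (hB : ∀ z, pml Q z ≤ B) (htot : ∑ z, margY Q z = 1) (hδ : 0 < δ) : barEps Q δ ≤ B := by
  rw [barEps_def]
  exact Real.sSup_le (barEps_bddAbove Q h0 hB htot hδ) hB0

/-- Pointwise: the left quantile is at most the right quantile. -/
lemma ubarEps_le_barEps (Q : X → Z → ℝ) {δ B : ℝ} (h0 : ∀ z, 0 ≤ margY Q z)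
    (hB : ∀ z, pml Q z ≤ B) (htot : ∑ z, margY Q z = 1) (hδ : 0 < δ) :
    ubarEps Q δ ≤ barEps Q δ := by
  apply le_of_forall_pos_le_add
  intro ε hε
  set t := barEps Q δ + ε with hT
  have hb0 : 0 ≤ barEps Q δ := barEps_nonneg Q δ
  have htS : t ∉ {t : ℝ | 0 ≤ t ∧ cdfF Q t ≤ 1 - δ} := by
    intro hmem
    have : t ≤ barEps Q δ := by
      rw [barEps_def]
      exact le_csSup ⟨B, barEps_bddAbove Q h0 hB htot hδ⟩ hmem
    linarith
  have h1 : 1 - δ ≤ cdfF Q t := by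
    by_contra hlt
    push_neg at hlt
    exact htS ⟨by linarith, hlt.le⟩
  rw [ubarEps_def]
  exact csInf_le ⟨0, fun s hs => hs.1⟩ ⟨by linarith, h1⟩
section Key
variable {X Y Z : Type} [Fintype X] [Fintype Y] [Fintype Z]

/-- pulling a y-independent constant out of a pushKernel-type sum -/
lemma push_pull (P : X → Y → ℝ) (K : Y → Z → ℝ) (x : X) (z z₀ : Z) (a c : ℝ) :
    ∑ y, P x y * (K y z + a * K y z₀ * c)
      = pushKernel P K x z + a * pushKernel P K x z₀ * c := by
  simp only [mul_add]
  rw [Finset.sum_add_distrib]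
  unfold pushKernel
  congr 1
  have h : ∀ y : Y, P x y * (a * K y z₀ * c) = (a * c) * (P x y * K y z₀) := by
    intro y; ring
  rw [Finset.sum_congr rfl (fun y _ => h y), ← Finset.mul_sum]
  ring

lemma margY_pull (Q : X → Z → ℝ) (z z₀ : Z) (a c : ℝ) :
    ∑ x, (Q x z + a * Q x z₀ * c) = margY Q z + a * margY Q z₀ * c := by
  rw [Finset.sum_add_distrib]
  unfold margY
  congr 1
  have h : ∀ x : X, a * Q x z₀ * c = (a * c) * Q x z₀ := by intro x; ring
  rw [Finset.sum_congr rfl (fun x _ => h x), ← Finset.mul_sum]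
  ring

end Key
section Key2
variable {X Y Z : Type} [Fintype X] [Fintype Y] [Fintype Z]

lemma key_lemma [Nonempty X] (P : X → Y → ℝ) (hP : IsJoint P) (K : Y → Z → ℝ)
    (hK : IsKernel K) {c : ℝ} (hc : 0 < c) (hc1 : c ≤ 1) (hcm : ∀ x, c ≤ margX P x)
    {δ : ℝ} (hδ0 : 0 < δ) (hδ1 : δ < 1) {t : ℝ} (ht : 0 ≤ t)
    (hFt : cdfF (pushKernel P K) t ≤ 1 - δ) :
    ∃ K' : Y → Z → ℝ, IsKernel K' ∧ t ≤ ubarEps (pushKernel P K') δ := by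
  set Q := pushKernel P K with hQdef
  have hB0 : 0 ≤ Real.log (1 / c) := Real.log_nonneg (by rw [le_div_iff₀ hc]; linarith)
  have hQ0 : ∀ x z, 0 ≤ Q x z := push_nn P K hP.1 hK.1
  have hm0' : ∀ z, 0 ≤ margY Q z := margY_push_nn P K hP.1 hK.1
  have htot : ∑ z, margY Q z = 1 := sum_margY_push P K hP hK
  have hB : ∀ z, pml Q z ≤ Real.log (1 / c) := pml_push_le P K hP hK hc hc1 hcm
  rcases eq_or_lt_of_le hFt with heq | hlt
  swap
  · -- easy case: CDF at t is strictly below 1 - δ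
    refine ⟨K, hK, le_ubarEps Q ht hB hB0 htot hδ0 ?_⟩
    intro s hs0 hst
    exact lt_of_le_of_lt (cdfF_mono Q hm0' hst.le) hlt
  -- hard case: CDF at t equals 1 - δ
  -- find z₀ with pml ≤ t and positive mass
  have hz₀ : ∃ z₀, pml Q z₀ ≤ t ∧ 0 < margY Q z₀ := by
    by_contra h
    push_neg at h
    have : cdfF Q t ≤ 0 := by
      apply Finset.sum_nonpos
      intro z hz
      rw [Finset.mem_filter] at hz
      exact h z hz.2
    rw [heq] at this
    linarith
  obtain ⟨z₀, hz₀t, hm₀pos⟩ := hz₀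
  -- find z* with pml > t and positive mass
  have hzs : ∃ zs, t < pml Q zs ∧ 0 < margY Q zs := by
    by_contra h
    push_neg at h
    have hsplit := Finset.sum_filter_add_sum_filter_not Finset.univ
      (fun z => pml Q z ≤ t) (margY Q)
    rw [htot] at hsplit
    have : ∑ z ∈ Finset.univ.filter (fun z => ¬ pml Q z ≤ t), margY Q z ≤ 0 := by
      apply Finset.sum_nonpos
      intro z hz
      rw [Finset.mem_filter] at hz
      exact h z (not_le.mp hz.2)
    have hF : cdfF Q t = 1 - δ := heq.symm ▸ rfl
    unfold cdfF at hF
    linarith [hF]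
  obtain ⟨zs, hzst, hmspos⟩ := hzs
  have hne : z₀ ≠ zs := by
    intro h
    rw [h] at hz₀t
    linarith
  set m₀ := margY Q z₀ with hm₀def
  set m := margY Q zs with hmdef
  set M := (⨆ x, condYX Q x zs) with hMdef
  have hmX : ∀ x, margX Q x = margX P x := margX_push P K hK
  have hcond0 : ∀ x z, 0 ≤ condYX Q x z := by
    intro x z
    exact div_nonneg (hQ0 x z) (by rw [hmX]; exact le_of_lt (lt_of_lt_of_le hc (hcm x)))
  have hM0 : 0 ≤ M := Real.iSup_nonneg (fun x => hcond0 x zs)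
  -- from t < pml Q zs, get exp t * m < M
  have hMm : Real.exp t * m < M := by
    have hppos : 0 < M / m := by
      by_contra hnp
      push_neg at hnp
      have : M / m = 0 := le_antisymm hnp (div_nonneg hM0 hmspos.le)
      have : pml Q zs = 0 := by unfold pml; rw [← hMdef, ← hmdef, this, Real.log_zero]
      linarith
    have := (Real.lt_log_iff_exp_lt hppos).mp hzst
    rw [lt_div_iff₀ hmspos] at this
    linarith
  set γ := M * Real.exp (-t) - m with hγdef
  have hγ : 0 < γ := by
    rw [hγdef, sub_pos, Real.exp_neg, ← div_eq_mul_inv, lt_div_iff₀ (Real.exp_pos t)]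
    linarith
  set η := min (1/2 : ℝ) (γ / (2 * m₀)) with hηdef
  have hη0 : 0 < η := lt_min (by norm_num) (div_pos hγ (by linarith))
  have hη2 : η ≤ 1/2 := min_le_left _ _
  have hηm₀ : η * m₀ < γ := by
    have h1 : η ≤ γ / (2 * m₀) := min_le_right _ _
    have h2 : η * (2 * m₀) ≤ γ := by
      rw [← le_div_iff₀ (by linarith : (0:ℝ) < 2 * m₀)]
      exact h1
    nlinarith
  -- the perturbed kernel
  set K' := fun y z' => K y z' + η * K y z₀ *
      ((if z' = zs then (1:ℝ) else 0) - (if z' = z₀ then (1:ℝ) else 0)) with hK'def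
  have hK' : IsKernel K' := by
    constructor
    · intro y z'
      show 0 ≤ K y z' + η * K y z₀ *
        ((if z' = zs then (1:ℝ) else 0) - (if z' = z₀ then (1:ℝ) else 0))
      by_cases h1 : z' = zs
      · subst h1
        rw [if_pos rfl, if_neg (Ne.symm hne)]
        have := hK.1 y z'
        have := hK.1 y z₀
        nlinarith
      · rw [if_neg h1]
        by_cases h2 : z' = z₀
        · subst h2
          rw [if_pos rfl]
          have := hK.1 y z'
          nlinarith
        · rw [if_neg h2]
          simpa using hK.1 y z'
    · intro y
      show (∑ z', (K y z' + η * K y z₀ *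
        ((if z' = zs then (1:ℝ) else 0) - (if z' = z₀ then (1:ℝ) else 0)))) = 1
      simp only [mul_sub, mul_add]
      rw [Finset.sum_add_distrib, Finset.sum_sub_distrib]
      have e1 : ∑ z', η * K y z₀ * (if z' = zs then (1:ℝ) else 0) = η * K y z₀ := by
        rw [← Finset.mul_sum]
        simp
      have e2 : ∑ z', η * K y z₀ * (if z' = z₀ then (1:ℝ) else 0) = η * K y z₀ := by
        rw [← Finset.mul_sum]
        simp
      rw [e1, e2, hK.2 y]
      ring
  set Q' := pushKernel P K' with hQ'def
  have hQ'eq : ∀ x z', Q' x z' = Q x z' + η * Q x z₀ *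
      ((if z' = zs then (1:ℝ) else 0) - (if z' = z₀ then (1:ℝ) else 0)) := by
    intro x z'
    rw [hQ'def, hQdef]
    exact push_pull P K x z' z₀ η _
  have hmY' : ∀ z', margY Q' z' = margY Q z' + η * m₀ *
      ((if z' = zs then (1:ℝ) else 0) - (if z' = z₀ then (1:ℝ) else 0)) := by
    intro z'
    unfold margY
    rw [Finset.sum_congr rfl (fun x _ => hQ'eq x z')]
    exact margY_pull Q z' z₀ η _
  have hmX' : ∀ x, margX Q' x = margX P x := margX_push P K' hK'
  have hcondeq : ∀ x z', z' ≠ zs → z' ≠ z₀ → condYX Q' x z' = condYX Q x z' := by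
    intro x z' h1 h2
    unfold condYX
    rw [hQ'eq, if_neg h1, if_neg h2, hmX' x, hmX x]
    ring_nf
  have hpml_other : ∀ z', z' ≠ zs → z' ≠ z₀ → pml Q' z' = pml Q z' := by
    intro z' h1 h2
    unfold pml
    rw [iSup_congr (fun x => hcondeq x z' h1 h2), hmY', if_neg h1, if_neg h2]
    ring_nf
  have h1η : (0:ℝ) < 1 - η := by linarith
  have hpml_z₀ : pml Q' z₀ = pml Q z₀ := by
    unfold pml
    have hc₀ : ∀ x, condYX Q' x z₀ = (1 - η) * condYX Q x z₀ := by
      intro x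
      unfold condYX
      rw [hQ'eq, if_neg hne, if_pos rfl, hmX' x, hmX x]
      ring
    rw [iSup_congr hc₀, ← Real.mul_iSup_of_nonneg h1η.le, hmY' z₀, if_neg hne, if_pos rfl]
    have : margY Q z₀ + η * m₀ * ((0:ℝ) - 1) = (1 - η) * m₀ := by
      rw [← hm₀def]; ring
    rw [this, mul_div_mul_left _ _ (ne_of_gt h1η)]
  have hpml_zs : t < pml Q' zs := by
    have hMle : M ≤ ⨆ x, condYX Q' x zs := by
      apply ciSup_mono (Set.Finite.bddAbove (Set.finite_range _))
      intro x
      unfold condYX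
      rw [hQ'eq, if_pos rfl, if_neg (Ne.symm hne), hmX' x, hmX x]
      have hx : 0 < margX P x := lt_of_lt_of_le hc (hcm x)
      apply div_le_div_of_nonneg_right _ hx.le
      nlinarith [hQ0 x z₀]
    have hm' : margY Q' zs = m + η * m₀ := by
      rw [hmY' zs, if_pos rfl, if_neg (Ne.symm hne)]
      ring
    have hm'pos : 0 < m + η * m₀ := by nlinarith
    have hm'lt : m + η * m₀ < M * Real.exp (-t) := by
      rw [hγdef] at hηm₀
      linarith
    have hexplt : Real.exp t < M / (m + η * m₀) := by
      rw [lt_div_iff₀ hm'pos]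
      have hMexp : M * Real.exp (-t) * Real.exp t = M := by
        rw [mul_assoc, ← Real.exp_add]
        simp
      have h2 := mul_lt_mul_of_pos_right hm'lt (Real.exp_pos t)
      rw [hMexp] at h2
      rw [mul_comm]
      exact h2
    have hfrac : M / (m + η * m₀) ≤ (⨆ x, condYX Q' x zs) / (m + η * m₀) :=
      div_le_div_of_nonneg_right hMle hm'pos.le
    unfold pml
    rw [hm']
    have hpos : 0 < (⨆ x, condYX Q' x zs) / (m + η * m₀) :=
      lt_of_lt_of_le (lt_trans (Real.exp_pos t) hexplt) hfrac
    rw [Real.lt_log_iff_exp_lt hpos]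
    linarith
  -- final: CDF of Q' is strictly below 1 - δ on [0, t)
  have htot' : ∑ z, margY Q' z = 1 := sum_margY_push P K' hP hK'
  have hB' : ∀ z, pml Q' z ≤ Real.log (1 / c) := pml_push_le P K' hP hK' hc hc1 hcm
  refine ⟨K', hK', le_ubarEps Q' ht hB' hB0 htot' hδ0 ?_⟩
  intro s hs0 hst
  have hfilters : Finset.univ.filter (fun z => pml Q' z ≤ s)
      = Finset.univ.filter (fun z => pml Q z ≤ s) := by
    apply Finset.filter_congr
    intro z' _
    by_cases h1 : z' = zs
    · subst h1
      simp only [iff_iff_implies_and_implies]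
      constructor
      · intro h; linarith
      · intro h; linarith
    · by_cases h2 : z' = z₀
      · subst h2
        rw [hpml_z₀]
      · rw [hpml_other z' h1 h2]
  have hzs_not : zs ∉ Finset.univ.filter (fun z => pml Q z ≤ s) := by
    simp only [Finset.mem_filter, Finset.mem_univ, true_and]
    push_neg
    linarith
  show cdfF Q' s < 1 - δ
  unfold cdfF
  rw [hfilters]
  have hsum : ∑ z' ∈ Finset.univ.filter (fun z => pml Q z ≤ s), margY Q' z'
      = cdfF Q s - η * m₀ * (if z₀ ∈ Finset.univ.filter (fun z => pml Q z ≤ s)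
          then (1:ℝ) else 0) := by
    rw [Finset.sum_congr rfl (fun z' _ => hmY' z')]
    simp only [mul_sub, mul_add]
    rw [Finset.sum_add_distrib, Finset.sum_sub_distrib]
    have e1 : ∑ z' ∈ Finset.univ.filter (fun z => pml Q z ≤ s),
        η * m₀ * (if z' = zs then (1:ℝ) else 0) = 0 := by
      apply Finset.sum_eq_zero
      intro z' hz'
      rw [if_neg, mul_zero]
      intro h
      rw [h] at hz'
      exact hzs_not hz'
    have e2 : ∑ z' ∈ Finset.univ.filter (fun z => pml Q z ≤ s),
        η * m₀ * (if z' = z₀ then (1:ℝ) else 0) = η * m₀ *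
          (if z₀ ∈ Finset.univ.filter (fun z => pml Q z ≤ s) then (1:ℝ) else 0) := by
      rw [← Finset.mul_sum, Finset.sum_ite_eq']
    rw [e1, e2]
    unfold cdfF
    ring
  rw [hsum]
  have hFs : cdfF Q s ≤ 1 - δ := by rw [← heq]; exact cdfF_mono Q hm0' hst.le
  by_cases hz₀s : z₀ ∈ Finset.univ.filter (fun z => pml Q z ≤ s)
  · rw [if_pos hz₀s]
    have hpos := mul_pos hη0 hm₀pos
    linarith
  · rw [if_neg hz₀s]
    -- z₀ contributes to cdfF Q t but not to cdfF Q s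
    have hsub : insert z₀ (Finset.univ.filter (fun z => pml Q z ≤ s))
        ⊆ Finset.univ.filter (fun z => pml Q z ≤ t) := by
      intro z' hz'
      rcases Finset.mem_insert.mp hz' with h | h
      · subst h
        simp only [Finset.mem_filter, Finset.mem_univ, true_and]
        exact hz₀t
      · simp only [Finset.mem_filter, Finset.mem_univ, true_and] at h ⊢
        linarith
    have : cdfF Q s + m₀ ≤ cdfF Q t := by
      unfold cdfF
      rw [hm₀def, add_comm, ← Finset.sum_insert hz₀s]
      exact Finset.sum_le_sum_of_subset_of_nonneg hsub (fun z' _ _ => hm0' z')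
    rw [heq] at this
    have hpos := mul_pos hη0 hm₀pos
    linarith
end Key2

lemma nonempty_of_isJoint {X Y : Type} [Fintype X] [Fintype Y] (P : X → Y → ℝ)
    (hP : IsJoint P) : Nonempty X ∧ Nonempty Y := by
  constructor
  · by_contra h
    rw [not_nonempty_iff] at h
    have := hP.2
    rw [Finset.univ_eq_empty, Finset.sum_empty] at this
    exact one_ne_zero this.symm
  · by_contra h
    rw [not_nonempty_iff] at h
    have := hP.2
    simp only [Finset.univ_eq_empty (α := Y), Finset.sum_empty, Finset.sum_const_zero] at this
    exact one_ne_zero this.symm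


/-- For all `δ ∈ (0,1)`, the supremum over all post-processings `Z`
(with `X - Y - Z`) of the left-continuous leakage quantile `ubar ε_Z(δ)` equals the
supremum over all post-processings of the right-continuous quantile `bar ε_Z(δ)`:
the PML envelope may be defined using either quantile. -/
theorem envelope_ubar_eq_bar
    {X Y : Type} [Fintype X] [Fintype Y]
    (P : X → Y → ℝ) (hP : IsJoint P)
    (hPX : ∀ x, 0 < margX P x) (hPY : ∀ y, 0 < margY P y)
    (δ : ℝ) (hδ : δ ∈ Set.Ioo (0 : ℝ) 1) :
    sSup {e : ℝ | ∃ (n : ℕ) (K : Y → Fin n → ℝ),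
        IsKernel K ∧ e = ubarEps (pushKernel P K) δ}
      = sSup {e : ℝ | ∃ (n : ℕ) (K : Y → Fin n → ℝ),
        IsKernel K ∧ e = barEps (pushKernel P K) δ} := by
  obtain ⟨hδ0, hδ1⟩ := hδ
  obtain ⟨hXne, hYne⟩ := nonempty_of_isJoint P hP
  haveI := hXne
  haveI := hYne
  -- a uniform positive lower bound on the X-marginal
  set c := Finset.univ.inf' Finset.univ_nonempty (margX P) with hcdef
  have hc : 0 < c := by
    rw [hcdef, Finset.lt_inf'_iff]
    intro x _
    exact hPX x
  have hcm : ∀ x, c ≤ margX P x := fun x => Finset.inf'_le _ (Finset.mem_univ x)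
  have hsummX : ∑ x, margX P x = 1 := hP.2
  have hc1 : c ≤ 1 := by
    obtain ⟨x0⟩ := hXne
    refine le_trans (hcm x0) ?_
    rw [← hsummX]
    exact Finset.single_le_sum (fun x _ => (hPX x).le) (Finset.mem_univ x0)
  have hB0 : 0 ≤ Real.log (1 / c) := Real.log_nonneg (by rw [le_div_iff₀ hc]; linarith)
  set Su := {e : ℝ | ∃ (n : ℕ) (K : Y → Fin n → ℝ),
      IsKernel K ∧ e = ubarEps (pushKernel P K) δ} with hSudef
  set Sb := {e : ℝ | ∃ (n : ℕ) (K : Y → Fin n → ℝ),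
      IsKernel K ∧ e = barEps (pushKernel P K) δ} with hSbdef
  -- trivial kernel
  have hK1 : IsKernel (fun (_ : Y) (_ : Fin 1) => (1:ℝ)) :=
    ⟨fun _ _ => zero_le_one, fun _ => by simp⟩
  have hSune : Su.Nonempty :=
    ⟨_, 1, fun _ _ => (1:ℝ), hK1, rfl⟩
  have hSbne : Sb.Nonempty :=
    ⟨_, 1, fun _ _ => (1:ℝ), hK1, rfl⟩
  have hSubdd : ∀ e ∈ Su, e ≤ Real.log (1 / c) := by
    rintro e ⟨n, K, hK, rfl⟩
    exact ubarEps_le _ (pml_push_le P K hP hK hc hc1 hcm) hB0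
      (sum_margY_push P K hP hK) hδ0
  have hSbbdd : ∀ e ∈ Sb, e ≤ Real.log (1 / c) := by
    rintro e ⟨n, K, hK, rfl⟩
    exact barEps_le _ (margY_push_nn P K hP.1 hK.1) hB0
      (pml_push_le P K hP hK hc hc1 hcm) (sum_margY_push P K hP hK) hδ0
  apply le_antisymm
  · -- ubar envelope ≤ bar envelope, via pointwise ubar ≤ bar
    apply csSup_le hSune
    rintro e ⟨n, K, hK, rfl⟩
    have h1 : ubarEps (pushKernel P K) δ ≤ barEps (pushKernel P K) δ :=
      ubarEps_le_barEps _ (margY_push_nn P K hP.1 hK.1)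
        (pml_push_le P K hP hK hc hc1 hcm) (sum_margY_push P K hP hK) hδ0
    refine le_trans h1 (le_csSup ⟨_, hSbbdd⟩ ?_)
    exact ⟨n, K, hK, rfl⟩
  · -- bar envelope ≤ ubar envelope, via the perturbation construction
    apply csSup_le hSbne
    rintro e ⟨n, K, hK, rfl⟩
    have hSu0 : 0 ≤ sSup Su := by
      refine le_trans (ubarEps_nonneg (pushKernel P (fun (_ : Y) (_ : Fin 1) => (1:ℝ))) δ)
        (le_csSup ⟨_, hSubdd⟩ ?_)
      exact ⟨1, fun _ _ => (1:ℝ), hK1, rfl⟩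
    rw [barEps_def]
    apply Real.sSup_le _ hSu0
    intro t ht
    obtain ⟨K', hK', hle⟩ := key_lemma P hP K hK hc hc1 hcm hδ0 hδ1 ht.1 ht.2
    refine le_trans hle (le_csSup ⟨_, hSubdd⟩ ?_)
    exact ⟨n, K', hK', rfl⟩
end Helpers
end
end

section
/- Let X and Y be finite random variables with joint distribution P_XY, where P_X(x) > 0 for all x and P_Y(y) > 0 for all y. Suppose P_XY satisfies ε-PML for some ε > 0, i.e., ℓ(X → y) = log max_x P_{Y|X=x}(y)/P_Y(y) ≤ ε for all y ∈ 𝒴. Then for all δ ∈ (0,1) the PML envelope satisfies ε_c(δ) ≤ ε. -/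
open Real Finset
open scoped Classical

noncomputable section

/-- If `P_XY` satisfies `ε`-PML, i.e. `ℓ(X → y) ≤ ε` for all `y`, then
for all `δ ∈ (0,1)` the PML envelope satisfies `ε_c(δ) ≤ ε`. -/
theorem pmlEnvelope_le_of_pml_le
    {X Y : Type} [Fintype X] [Fintype Y]
    (P : X → Y → ℝ) (hP : IsJoint P)
    (hPX : ∀ x, 0 < margX P x) (hPY : ∀ y, 0 < margY P y)
    (ε : ℝ) (hε : 0 < ε) (hpml : ∀ y, pml P y ≤ ε)
    (δ : ℝ) (hδ : δ ∈ Set.Ioo (0 : ℝ) 1) :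
    pmlEnvelope P δ ≤ ε := by
  obtain ⟨hδ0, hδ1⟩ := hδ
  -- key pointwise bound on P
  have key : ∀ x y, P x y ≤ Real.exp ε * margY P y * margX P x := by
    intro x y
    have hbdd : BddAbove (Set.range fun x' => condYX P x' y) :=
      (Set.finite_range _).bddAbove
    have hle : condYX P x y ≤ ⨆ x', condYX P x' y := le_ciSup hbdd x
    have hSle : (⨆ x', condYX P x' y) ≤ Real.exp ε * margY P y := by
      by_cases hS : (⨆ x', condYX P x' y) ≤ 0
      · exact hS.trans (mul_nonneg (Real.exp_nonneg ε) (hPY y).le)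
      · push_neg at hS
        have hr : 0 < (⨆ x', condYX P x' y) / margY P y := div_pos hS (hPY y)
        have hlog := (Real.log_le_iff_le_exp hr).mp (hpml y)
        exact (div_le_iff₀ (hPY y)).mp hlog
    have : P x y / margX P x ≤ Real.exp ε * margY P y := hle.trans hSle
    have := (div_le_iff₀ (hPX x)).mp this
    linarith
  refine Real.sSup_le ?_ hε.le
  rintro e ⟨n, K, hK, rfl⟩
  set Q := pushKernel P K with hQ
  -- margX of Q equals margX of P
  have hmX : ∀ x, margX Q x = margX P x := by
    intro x
    simp only [margX, hQ, pushKernel]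
    rw [Finset.sum_comm]
    refine Finset.sum_congr rfl fun y _ => ?_
    rw [← Finset.mul_sum, hK.2 y, mul_one]
  -- margY of Q
  have hmY : ∀ z, margY Q z = ∑ y, margY P y * K y z := by
    intro z
    simp only [margY, hQ, pushKernel]
    rw [Finset.sum_comm]
    exact Finset.sum_congr rfl fun y _ => by rw [Finset.sum_mul]
  have hmYnn : ∀ z, 0 ≤ margY Q z := by
    intro z
    rw [hmY]
    exact Finset.sum_nonneg fun y _ => mul_nonneg (hPY y).le (hK.1 y z)
  -- pml bound for Q
  have hpmlQ : ∀ z : Fin n, pml Q z ≤ ε := by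
    intro z
    have hQle : ∀ x, condYX Q x z ≤ Real.exp ε * margY Q z := by
      intro x
      have hQb : Q x z ≤ Real.exp ε * margY Q z * margX P x := by
        rw [hmY, Finset.mul_sum, Finset.sum_mul]
        simp only [hQ, pushKernel]
        refine Finset.sum_le_sum fun y _ => ?_
        calc P x y * K y z
            ≤ (Real.exp ε * margY P y * margX P x) * K y z :=
              mul_le_mul_of_nonneg_right (key x y) (hK.1 y z)
          _ = Real.exp ε * (margY P y * K y z) * margX P x := by ring
      unfold condYX
      rw [hmX]
      exact (div_le_iff₀ (hPX x)).mpr hQb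
    have hsup : (⨆ x, condYX Q x z) ≤ Real.exp ε * margY Q z := by
      rcases isEmpty_or_nonempty X with h | h
      · exfalso; have h2 := hP.2; simp at h2
      · exact ciSup_le hQle
    have hsupnn : 0 ≤ ⨆ x, condYX Q x z := by
      rcases isEmpty_or_nonempty X with h | h
      · exfalso; have h2 := hP.2; simp at h2
      · refine le_ciSup_of_le (Set.finite_range _).bddAbove (Classical.arbitrary X) ?_
        exact div_nonneg (Finset.sum_nonneg fun y _ =>
          mul_nonneg (hP.1 _ y) (hK.1 y z)) (by rw [hmX]; exact (hPX _).le)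
    unfold pml
    by_cases hz : 0 < margY Q z
    · have hratio : (⨆ x, condYX Q x z) / margY Q z ≤ Real.exp ε :=
        (div_le_iff₀ hz).mpr (by linarith [hsup])
      by_cases h0 : (⨆ x, condYX Q x z) / margY Q z ≤ 0
      · have : (⨆ x, condYX Q x z) / margY Q z = 0 :=
          le_antisymm h0 (div_nonneg hsupnn hz.le)
        rw [this, Real.log_zero]; exact hε.le
      · push_neg at h0
        exact (Real.log_le_iff_le_exp h0).mpr hratio
    · have hz0 : margY Q z = 0 := le_antisymm (not_lt.mp hz) (hmYnn z)
      rw [hz0, div_zero, Real.log_zero]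
      exact hε.le
  -- total mass of margY Q is 1
  have htot : (∑ z, margY Q z) = 1 := by
    have : (∑ z, margY Q z) = ∑ y, margY P y := by
      rw [Finset.sum_congr rfl fun z _ => hmY z, Finset.sum_comm]
      exact Finset.sum_congr rfl fun y _ => by rw [← Finset.mul_sum, hK.2 y, mul_one]
    rw [this]
    simp only [margY]
    rw [Finset.sum_comm]
    exact hP.2
  -- conclude ubarEps ≤ ε
  refine csInf_le ⟨0, fun t ht => ht.1⟩ ?_
  refine ⟨hε.le, ?_⟩
  have hfil : (Finset.univ.filter fun z : Fin n => pml Q z ≤ ε) = Finset.univ := by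
    refine Finset.filter_true_of_mem fun z _ => hpmlQ z
  rw [hfil, htot]
  linarith
end
end

section
/- Let X and Y be finite random variables with joint distribution P_XY, where P_X(x) > 0 for all x and P_Y(y) > 0 for all y. Suppose there exists ε > 0 such that ℓ(X → y) = log max_x P_{Y|X=x}(y)/P_Y(y) = ε for every outcome y ∈ 𝒴. Then the PML envelope satisfies ε_c(δ) = ε for all δ ∈ (0,1). -/
open Real Finset
open scoped Classical

noncomputable section

section Aux
variable {X Y Z : Type} [Fintype X] [Fintype Y] [Fintype Z]

lemma margY_push (P : X → Y → ℝ) (K : Y → Z → ℝ) (z : Z) :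
    margY (pushKernel P K) z = ∑ y, margY P y * K y z := by
  unfold margY pushKernel
  rw [Finset.sum_comm]
  simp_rw [← Finset.sum_mul]

end Aux


/-- If every outcome `y ∈ 𝒴` has the same leakage `ℓ(X → y) = ε > 0`,
then the PML envelope satisfies `ε_c(δ) = ε` for all `δ ∈ (0,1)`. -/

theorem pmlEnvelope_of_const_pml
    {X Y : Type} [Fintype X] [Fintype Y]
    (P : X → Y → ℝ) (hP : IsJoint P)
    (hPX : ∀ x, 0 < margX P x) (hPY : ∀ y, 0 < margY P y)
    (ε : ℝ) (hε : 0 < ε) (hconst : ∀ y, pml P y = ε) :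
    ∀ δ ∈ Set.Ioo (0 : ℝ) 1, pmlEnvelope P δ = ε := by
  intro δ hδ
  obtain ⟨hδ0, hδ1⟩ := hδ
  -- Y is nonempty
  have hY : Nonempty Y := by
    by_contra h
    rw [not_nonempty_iff] at h
    have := hP.2
    simp at this
  -- X is nonempty
  have hX : Nonempty X := by
    by_contra h
    rw [not_nonempty_iff] at h
    have h0 := hconst (Classical.arbitrary Y)
    rw [pml] at h0
    rw [iSup_of_empty'] at h0
    simp [Real.sSup_empty] at h0
    exact absurd h0.symm (ne_of_gt hε)
  have hbdd : ∀ y : Y, BddAbove (Set.range fun x => condYX P x y) :=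
    fun y => Set.Finite.bddAbove (Set.finite_range _)
  -- the supremum of conditional probabilities equals exp ε * margY
  have hsup : ∀ y, (⨆ x, condYX P x y) = Real.exp ε * margY P y := by
    intro y
    have hm := hPY y
    have hlog := hconst y
    rw [pml] at hlog
    set s := ⨆ x, condYX P x y with hs
    have hs0 : 0 ≤ s := by
      refine le_ciSup_of_le (hbdd y) (Classical.arbitrary X) ?_
      exact div_nonneg (hP.1 _ _) (hPX _).le
    have hr0 : 0 ≤ s / margY P y := div_nonneg hs0 hm.le
    rcases eq_or_lt_of_le hr0 with h0 | h0
    · rw [← h0] at hlog; simp at hlog; exact absurd hlog.symm (ne_of_gt hε)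
    · have := Real.exp_log h0
      rw [hlog] at this
      rw [eq_div_iff (ne_of_gt hm)] at this
      linarith
  have hxle : ∀ x y, condYX P x y ≤ Real.exp ε * margY P y := by
    intro x y
    exact (le_ciSup (hbdd y) x).trans (hsup y).le
  -- membership set of the envelope
  set S : Set ℝ := {e : ℝ | ∃ (n : ℕ) (K : Y → Fin n → ℝ),
    IsKernel K ∧ e = ubarEps (pushKernel P K) δ} with hS
  -- Upper bound: every element of S is ≤ ε
  have hub : ∀ e ∈ S, e ≤ ε := by
    rintro e ⟨n, K, hK, rfl⟩
    set Q := pushKernel P K with hQ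
    have hQ0 : ∀ x z, 0 ≤ Q x z := fun x z =>
      Finset.sum_nonneg fun y _ => mul_nonneg (hP.1 x y) (hK.1 y z)
    have hmQ0 : ∀ z, 0 ≤ margY Q z := fun z =>
      Finset.sum_nonneg fun x _ => hQ0 x z
    have hkey : ∀ (x : X) (z : Fin n), condYX Q x z ≤ Real.exp ε * margY Q z := by
      intro x z
      rw [condYX, margX_push P K hK, margY_push, hQ, pushKernel, Finset.sum_div,
        Finset.mul_sum]
      refine Finset.sum_le_sum fun y _ => ?_
      have h1 := hxle x y
      rw [condYX] at h1
      have h2 := hK.1 y z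
      calc P x y * K y z / margX P x = (P x y / margX P x) * K y z := by ring
        _ ≤ (Real.exp ε * margY P y) * K y z := mul_le_mul_of_nonneg_right h1 h2
        _ = Real.exp ε * (margY P y * K y z) := by ring
    have hsupQ : ∀ z : Fin n, (⨆ x, condYX Q x z) ≤ Real.exp ε * margY Q z :=
      fun z => ciSup_le fun x => hkey x z
    have hsupQ0 : ∀ z : Fin n, 0 ≤ ⨆ x, condYX Q x z := by
      intro z
      refine le_ciSup_of_le (Set.Finite.bddAbove (Set.finite_range _))
        (Classical.arbitrary X) ?_
      exact div_nonneg (hQ0 _ _) (by rw [margX_push P K hK]; exact (hPX _).le)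
    have hpmlQ : ∀ z : Fin n, pml Q z ≤ ε := by
      intro z
      rw [pml]
      rcases eq_or_lt_of_le (hmQ0 z) with hm | hm
      · have hz : (⨆ x, condYX Q x z) ≤ 0 := by
          have := hsupQ z; rw [← hm] at this; simpa using this
        have hz' : (⨆ x, condYX Q x z) = 0 := le_antisymm hz (hsupQ0 z)
        rw [hz']; simp; exact hε.le
      · have hr : (⨆ x, condYX Q x z) / margY Q z ≤ Real.exp ε := by
          rw [div_le_iff₀ hm]
          calc (⨆ x, condYX Q x z) ≤ Real.exp ε * margY Q z := hsupQ z
            _ = Real.exp ε * margY Q z := rfl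
        have hr0 : 0 ≤ (⨆ x, condYX Q x z) / margY Q z :=
          div_nonneg (hsupQ0 z) hm.le
        rcases eq_or_lt_of_le hr0 with h0 | h0
        · rw [← h0]; simp; exact hε.le
        · rw [← Real.log_exp ε]
          exact Real.log_le_log (by exact h0) hr
    have hmem : ε ∈ {t : ℝ | 0 ≤ t ∧
        1 - δ ≤ ∑ z ∈ Finset.univ.filter (fun z => pml Q z ≤ t), margY Q z} := by
      refine ⟨hε.le, ?_⟩
      have hfil : Finset.univ.filter (fun z : Fin n => pml Q z ≤ ε) = Finset.univ := by
        refine Finset.filter_true_of_mem fun z _ => hpmlQ z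
      rw [hfil, sum_margY_push P K hP hK]
      linarith
    exact csInf_le ⟨0, fun t ht => ht.1⟩ hmem
  -- Lower bound: ε ∈ S via the identity kernel
  have hmemS : ε ∈ S := by
    set n := Fintype.card Y with hn
    set eY : Y ≃ Fin n := Fintype.equivFin Y with heY
    set K : Y → Fin n → ℝ := fun y z => if z = eY y then 1 else 0 with hK
    have hKker : IsKernel K := by
      constructor
      · intro y z; dsimp [K]; split <;> norm_num
      · intro y; simp [K]
    refine ⟨n, K, hKker, ?_⟩
    have hQeq : ∀ x z, pushKernel P K x z = P x (eY.symm z) := by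
      intro x z
      rw [pushKernel]
      simp only [K, mul_ite, mul_one, mul_zero]
      have hcond : ∀ y, (z = eY y) ↔ eY.symm z = y := fun y => (Equiv.symm_apply_eq eY).symm
      simp only [hcond]
      rw [Finset.sum_ite_eq]
      simp
    set Q := pushKernel P K with hQdef
    have hmargXQ : ∀ x, margX Q x = margX P x := fun x => margX_push P K hKker x
    have hmargYQ : ∀ z, margY Q z = margY P (eY.symm z) := by
      intro z
      rw [margY, margY]
      exact Finset.sum_congr rfl fun x _ => hQeq x z
    have hpmlQ : ∀ z, pml Q z = ε := by
      intro z
      rw [pml, hmargYQ]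
      have : (⨆ x, condYX Q x z) = ⨆ x, condYX P x (eY.symm z) := by
        congr 1; funext x
        rw [condYX, condYX, hQeq, hmargXQ]
      rw [this, ← pml]
      exact hconst _
    have hsum1 : ∑ z, margY Q z = 1 := sum_margY_push P K hP hKker
    -- the quantile set is exactly [ε, ∞)
    have hTset : {t : ℝ | 0 ≤ t ∧
        1 - δ ≤ ∑ z ∈ Finset.univ.filter (fun z => pml Q z ≤ t), margY Q z}
        = Set.Ici ε := by
      ext t
      simp only [Set.mem_setOf_eq, Set.mem_Ici]
      constructor
      · rintro ⟨ht0, ht⟩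
        by_contra hlt
        push_neg at hlt
        have hfil : Finset.univ.filter (fun z : Fin n => pml Q z ≤ t) = ∅ := by
          refine Finset.filter_false_of_mem fun z _ => ?_
          rw [hpmlQ z]; linarith
        rw [hfil] at ht
        simp at ht
        linarith
      · intro ht
        refine ⟨le_trans hε.le ht, ?_⟩
        have hfil : Finset.univ.filter (fun z : Fin n => pml Q z ≤ t) = Finset.univ := by
          refine Finset.filter_true_of_mem fun z _ => ?_
          rw [hpmlQ z]; exact ht
        rw [hfil, hsum1]
        linarith
    rw [ubarEps, hTset, csInf_Ici]
  -- conclude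
  rw [pmlEnvelope, ← hS]
  exact le_antisymm (csSup_le ⟨ε, hmemS⟩ hub) (le_csSup ⟨ε, hub⟩ hmemS)
end
end

section
/- Let k ≥ 2, ε_r > 0, let P_X be a distribution on {1,…,k} with p_i = P_X(i) > 0 and p_1 ≤ p_2 ≤ … ≤ p_k, and let P_{Y|X} be the k-randomized response mechanism: P_{Y|X=i}(j) = α := e^{ε_r}/(e^{ε_r}+k−1) if j = i, and = β := 1/(e^{ε_r}+k−1) if j ≠ i. Set q_j = P_Y(j) = β + (α−β)p_j. Then for every δ ∈ (0, q_1], the PML envelope satisfies ε_c(δ) = log(α/q_1). -/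
open Real Finset
open scoped Classical

noncomputable section

set_option maxHeartbeats 1000000 in
/-- For the `k`-randomized response mechanism with parameter `ε_r > 0`
and a prior `p₁ ≤ … ≤ p_k` with positive entries, where
`α = e^{ε_r}/(e^{ε_r}+k-1)`, `β = 1/(e^{ε_r}+k-1)`, `q_j = β + (α-β) p_j`,
the PML envelope satisfies `ε_c(δ) = log (α / q₁)` for every `δ ∈ (0, q₁]`. -/
theorem pmlEnvelope_krr_small_delta
    (k : ℕ) (hk : 2 ≤ k) (εr : ℝ) (hεr : 0 < εr)
    (p : Fin k → ℝ) (hp : ∀ i, 0 < p i) (hpsum : ∑ i, p i = 1) (hmono : Monotone p)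
    (α β : ℝ)
    (hα : α = Real.exp εr / (Real.exp εr + k - 1))
    (hβ : β = 1 / (Real.exp εr + k - 1))
    (q : Fin k → ℝ) (hq : ∀ j, q j = β + (α - β) * p j)
    (δ : ℝ) (hδ : 0 < δ) (hδq : δ ≤ q ⟨0, by omega⟩) :
    pmlEnvelope (fun i j : Fin k => p i * (if j = i then α else β)) δ
      = Real.log (α / q ⟨0, by omega⟩) := by

  have hk0 : 0 < k := by omega
  haveI : Nonempty (Fin k) := ⟨⟨0, hk0⟩⟩
  have hi0 : (⟨0, by omega⟩ : Fin k) = (⟨0, hk0⟩ : Fin k) := rfl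
  set i0 : Fin k := ⟨0, hk0⟩ with hi0def
  rw [hi0]
  -- basic numeric facts
  have hE1 : 1 < Real.exp εr := Real.one_lt_exp_iff.mpr hεr
  have hk2 : (2:ℝ) ≤ (k:ℝ) := by exact_mod_cast hk
  have hD : 0 < Real.exp εr + (k:ℝ) - 1 := by linarith
  have hβ0 : 0 < β := by rw [hβ]; positivity
  have hβα : β < α := by
    rw [hα, hβ, div_lt_div_iff₀ hD hD]
    nlinarith
  have hα0 : 0 < α := lt_trans hβ0 hβα
  have hsum1 : α + ((k:ℝ)-1)*β = 1 := by
    rw [hα, hβ]; field_simp; ring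
  have hα1 : α < 1 := by nlinarith [hβ0, hk2]
  have hqpos : ∀ j, 0 < q j := by
    intro j; rw [hq]; nlinarith [hp j, hβα, hβ0]
  have hqmin : ∀ j, q i0 ≤ q j := by
    intro j
    have hij : i0 ≤ j := by simp [hi0def, Fin.le_def]
    have hpij := hmono hij
    rw [hq, hq]; nlinarith [hβα]
  have hple1 : ∀ y, p y ≤ 1 := by
    intro y
    rw [← hpsum]
    exact Finset.single_le_sum (fun i _ => (hp i).le) (Finset.mem_univ y)
  have hp0lt : p i0 < 1 := by
    have h1 : ((⟨1, by omega⟩ : Fin k)) ≠ i0 := by simp [hi0def, Fin.ext_iff]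
    have := Finset.single_lt_sum h1 (Finset.mem_univ i0)
      (Finset.mem_univ (⟨1, by omega⟩ : Fin k)) (hp _) (fun i _ _ => (hp i).le)
    rwa [hpsum] at this
  have hq0α : q i0 < α := by
    rw [hq]; nlinarith [hβα, hp0lt]
  have hqle1 : ∀ y, q y ≤ 1 := by
    intro y; rw [hq]; nlinarith [hβα, hple1 y, hα1, hp y]
  have hqsum : ∑ j, q j = 1 := by
    have h1 : ∑ j, q j = (k:ℝ)*β + (α - β) * ∑ j, p j := by
      simp_rw [hq]
      rw [Finset.sum_add_distrib, Finset.sum_const, Finset.card_univ, Fintype.card_fin,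
        ← Finset.mul_sum, nsmul_eq_mul]
    rw [h1, hpsum]; linarith
  have hq01 : q i0 < 1 := lt_trans hq0α hα1
  set L : ℝ := Real.log (α / q i0) with hLdef
  have hL0 : 0 ≤ L := Real.log_nonneg ((one_le_div (hqpos i0)).mpr hq0α.le)
  set P : Fin k → Fin k → ℝ := fun i j : Fin k => p i * (if j = i then α else β) with hPdef
  -- marginals of P
  have hite : ∀ i : Fin k, ∑ j, (if j = i then α else β) = 1 := by
    intro i
    have h1 : ∀ j : Fin k, (if j = i then α else β) = β + (if j = i then α - β else 0) := by
      intro j; split <;> ring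
    simp_rw [h1]
    rw [Finset.sum_add_distrib, Finset.sum_const, Finset.card_univ, Fintype.card_fin,
      Finset.sum_ite_eq' Finset.univ i fun _ => α - β]
    simp only [Finset.mem_univ, if_true, nsmul_eq_mul]
    linarith
  have hmargX : ∀ i, margX P i = p i := by
    intro i
    unfold margX
    simp only [hPdef]
    rw [← Finset.mul_sum, hite i, mul_one]
  have hmargYP : ∀ j, margY P j = q j := by
    intro j
    unfold margY
    have h1 : ∀ i : Fin k, P i j = β * p i + (if i = j then (α - β) * p i else 0) := by
      intro i
      simp only [hPdef]
      rcases eq_or_ne i j with h | h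
      · subst h; simp; ring
      · rw [if_neg h, if_neg (Ne.symm h)]; ring
    simp_rw [h1]
    rw [Finset.sum_add_distrib, ← Finset.mul_sum, hpsum,
      Finset.sum_ite_eq' Finset.univ j fun i => (α - β) * p i]
    simp only [Finset.mem_univ, if_true]
    rw [hq]; ring
  -- kernel pushforward facts
  have hkernel : ∀ (n : ℕ) (K : Fin k → Fin n → ℝ), IsKernel K →
      (∀ x, margX (pushKernel P K) x = p x) ∧
      (∀ z, margY (pushKernel P K) z = ∑ y, q y * K y z) ∧
      (∀ x z, condYX (pushKernel P K) x z = ∑ y, (if y = x then α else β) * K y z) := by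
    intro n K hK
    have hmx : ∀ x, margX (pushKernel P K) x = p x := by
      intro x
      have h1 : margX (pushKernel P K) x = ∑ y, P x y * ∑ z, K y z := by
        unfold margX pushKernel
        rw [Finset.sum_comm]
        exact Finset.sum_congr rfl fun y _ => (Finset.mul_sum _ _ _).symm
      rw [h1]
      simp_rw [hK.2]
      simp only [mul_one]
      exact hmargX x
    refine ⟨hmx, ?_, ?_⟩
    · intro z
      unfold margY pushKernel
      rw [Finset.sum_comm]
      refine Finset.sum_congr rfl fun y _ => ?_
      rw [← Finset.sum_mul]
      congr 1
      exact hmargYP y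
    · intro x z
      unfold condYX
      rw [hmx x]
      have h2 : pushKernel P K x z = p x * ∑ y, (if y = x then α else β) * K y z := by
        unfold pushKernel
        rw [Finset.mul_sum]
        refine Finset.sum_congr rfl fun y _ => ?_
        simp only [hPdef]; ring
      rw [h2, mul_div_cancel_left₀ _ (hp x).ne']
  have htotal : ∀ (n : ℕ) (K : Fin k → Fin n → ℝ), IsKernel K →
      ∑ z, margY (pushKernel P K) z = 1 := by
    intro n K hK
    obtain ⟨hmx, hmy, -⟩ := hkernel n K hK
    simp_rw [hmy]
    rw [Finset.sum_comm]
    simp_rw [← Finset.mul_sum, hK.2, mul_one]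
    exact hqsum
  -- every post-processed outcome has pml at most L
  have hpml_le : ∀ (n : ℕ) (K : Fin k → Fin n → ℝ), IsKernel K → ∀ z,
      pml (pushKernel P K) z ≤ L := by
    intro n K hK z
    obtain ⟨hmx, hmy, hc⟩ := hkernel n K hK
    unfold pml
    have hMeq : margY (pushKernel P K) z = ∑ y, q y * K y z := hmy z
    have hM0 : 0 ≤ margY (pushKernel P K) z := by
      rw [hMeq]
      exact Finset.sum_nonneg fun y _ => mul_nonneg (hqpos y).le (hK.1 y z)
    rcases eq_or_lt_of_le hM0 with h0 | hMpos
    · rw [← h0, div_zero, Real.log_zero]; exact hL0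
    · have hMS : margY (pushKernel P K) z ≤ ∑ y, K y z := by
        rw [hMeq]
        refine Finset.sum_le_sum fun y _ => ?_
        nlinarith [hK.1 y z, hqle1 y, hqpos y]
      have hSpos : 0 < ∑ y, K y z := lt_of_lt_of_le hMpos hMS
      have hsup_le : (⨆ x, condYX (pushKernel P K) x z) ≤ α * ∑ y, K y z := by
        refine ciSup_le fun x => ?_
        rw [hc x z, Finset.mul_sum]
        refine Finset.sum_le_sum fun y _ => ?_
        have h3 := hK.1 y z
        split_ifs with h <;> nlinarith [hβα]
      have hsup_0 : 0 ≤ ⨆ x, condYX (pushKernel P K) x z := by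
        have hb : BddAbove (Set.range fun x => condYX (pushKernel P K) x z) :=
          Set.Finite.bddAbove (Set.finite_range _)
        refine le_trans ?_ (le_ciSup hb i0)
        rw [hc i0 z]
        exact Finset.sum_nonneg fun y _ =>
          mul_nonneg (by split_ifs <;> linarith) (hK.1 y z)
      have hqS : q i0 * ∑ y, K y z ≤ margY (pushKernel P K) z := by
        rw [hMeq, Finset.mul_sum]
        exact Finset.sum_le_sum fun y _ =>
          mul_le_mul_of_nonneg_right (hqmin y) (hK.1 y z)
      have hratio : (⨆ x, condYX (pushKernel P K) x z) / margY (pushKernel P K) z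
          ≤ α / q i0 := by
        rw [div_le_div_iff₀ hMpos (hqpos i0)]
        calc (⨆ x, condYX (pushKernel P K) x z) * q i0
            ≤ (α * ∑ y, K y z) * q i0 :=
              mul_le_mul_of_nonneg_right hsup_le (hqpos i0).le
          _ = α * (q i0 * ∑ y, K y z) := by ring
          _ ≤ α * margY (pushKernel P K) z :=
              mul_le_mul_of_nonneg_left hqS hα0.le
      have hr0 : 0 ≤ (⨆ x, condYX (pushKernel P K) x z) / margY (pushKernel P K) z :=
        div_nonneg hsup_0 hM0
      rcases eq_or_lt_of_le hr0 with h | h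
      · rw [← h, Real.log_zero]; exact hL0
      · exact Real.log_le_log h hratio
  -- L is in the quantile set for every kernel
  have hLmem : ∀ (n : ℕ) (K : Fin k → Fin n → ℝ), IsKernel K →
      L ∈ {t : ℝ | 0 ≤ t ∧ 1 - δ ≤ ∑ z ∈ Finset.univ.filter
        (fun z => pml (pushKernel P K) z ≤ t), margY (pushKernel P K) z} := by
    intro n K hK
    refine ⟨hL0, ?_⟩
    rw [Finset.filter_true_of_mem fun z _ => hpml_le n K hK z, htotal n K hK]
    linarith
  have hub : ∀ (n : ℕ) (K : Fin k → Fin n → ℝ), IsKernel K →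
      ubarEps (pushKernel P K) δ ≤ L := by
    intro n K hK
    exact csInf_le ⟨0, fun t ht => ht.1⟩ (hLmem n K hK)
  have hbddS : ∀ e ∈ {e : ℝ | ∃ (n : ℕ) (K : Fin k → Fin n → ℝ),
      IsKernel K ∧ e = ubarEps (pushKernel P K) δ}, e ≤ L := by
    rintro e ⟨n, K, hK, rfl⟩
    exact hub n K hK
  have hK1 : IsKernel (fun (_ : Fin k) (_ : Fin 1) => (1:ℝ)) :=
    ⟨fun _ _ => zero_le_one, fun y => by simp⟩
  have hne : Set.Nonempty {e : ℝ | ∃ (n : ℕ) (K : Fin k → Fin n → ℝ),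
      IsKernel K ∧ e = ubarEps (pushKernel P K) δ} :=
    ⟨_, 1, _, hK1, rfl⟩
  have h1 : pmlEnvelope P δ ≤ L := csSup_le hne hbddS
  -- lower bound
  have hlow : ∀ w, w < L → w < pmlEnvelope P δ := by
    intro w hw
    have hAq : q i0 < α * Real.exp (-w) := by
      have hexp : Real.exp w < α / q i0 := by
        have := Real.exp_lt_exp.mpr hw
        rwa [hLdef, Real.exp_log (div_pos hα0 (hqpos i0))] at this
      have h2 : Real.exp w * q i0 < α := (lt_div_iff₀ (hqpos i0)).mp hexp
      rw [Real.exp_neg, ← div_eq_mul_inv]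
      rw [lt_div_iff₀ (Real.exp_pos w)]
      linarith [h2]
    set A : ℝ := α * Real.exp (-w) with hA
    set l : ℝ := min ((A - q i0)/2) (1/2) with hldef
    have hl0 : 0 < l := lt_min (by linarith) (by norm_num)
    have hl1 : l ≤ 1/2 := min_le_right _ _
    have hlA : q i0 + l < A := by
      have h3 : l ≤ (A - q i0)/2 := min_le_left _ _
      linarith
    set K2 : Fin k → Fin 2 → ℝ := fun y z =>
      if z = 1 then (if y = i0 then 1 else l) else (if y = i0 then 0 else 1 - l) with hK2def
    have hK2 : IsKernel K2 := by
      constructor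
      · intro y z
        simp only [hK2def]
        split_ifs <;> linarith
      · intro y
        rw [Fin.sum_univ_two]
        simp only [hK2def]
        norm_num
        split_ifs <;> ring
    obtain ⟨hmx2, hmy2, hc2⟩ := hkernel 2 K2 hK2
    have hM1 : margY (pushKernel P K2) 1 = q i0 + l * (1 - q i0) := by
      rw [hmy2]
      have h4 : ∀ y : Fin k, q y * K2 y 1
          = l * q y + (if y = i0 then (1 - l) * q y else 0) := by
        intro y
        simp only [hK2def]
        norm_num
        split_ifs <;> ring
      simp_rw [h4]
      rw [Finset.sum_add_distrib, ← Finset.mul_sum, hqsum,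
        Finset.sum_ite_eq' Finset.univ i0 fun y => (1 - l) * q y]
      simp only [Finset.mem_univ, if_true]
      ring
    have hM1gt : q i0 < margY (pushKernel P K2) 1 := by
      rw [hM1]; nlinarith [hl0, hq01]
    have hM1pos : 0 < margY (pushKernel P K2) 1 := lt_trans (hqpos i0) hM1gt
    have hM1A : margY (pushKernel P K2) 1 < A := by
      rw [hM1]
      nlinarith [mul_pos hl0 (hqpos i0), hlA]
    have hcond_i0 : α ≤ condYX (pushKernel P K2) i0 1 := by
      rw [hc2 i0 1]
      have h5 : (fun y => (if y = i0 then α else β) * K2 y 1) i0 = α := by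
        simp [hK2def]
      calc α = (fun y => (if y = i0 then α else β) * K2 y 1) i0 := h5.symm
        _ ≤ ∑ y, (if y = i0 then α else β) * K2 y 1 :=
          Finset.single_le_sum (f := fun y => (if y = i0 then α else β) * K2 y 1)
            (fun y _ => mul_nonneg (by split_ifs <;> linarith) (hK2.1 y 1))
            (Finset.mem_univ i0)
    have hsupb : BddAbove (Set.range fun x => condYX (pushKernel P K2) x 1) :=
      Set.Finite.bddAbove (Set.finite_range _)
    have hsup_ge : α ≤ ⨆ x, condYX (pushKernel P K2) x 1 :=
      le_trans hcond_i0 (le_ciSup hsupb i0)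
    have hw_lt : w < pml (pushKernel P K2) 1 := by
      unfold pml
      have hr : Real.exp w
          < (⨆ x, condYX (pushKernel P K2) x 1) / margY (pushKernel P K2) 1 := by
        rw [lt_div_iff₀ hM1pos]
        have h6 : Real.exp w * A = α := by
          rw [hA]
          rw [mul_comm α, ← mul_assoc, ← Real.exp_add]
          simp
        nlinarith [Real.exp_pos w, hM1A, hsup_ge]
      calc w = Real.log (Real.exp w) := (Real.log_exp w).symm
        _ < _ := Real.log_lt_log (Real.exp_pos w) hr
    have hmynn : ∀ z, 0 ≤ margY (pushKernel P K2) z := by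
      intro z
      rw [hmy2]
      exact Finset.sum_nonneg fun y _ => mul_nonneg (hqpos y).le (hK2.1 y z)
    have hles : pml (pushKernel P K2) 1 ≤ ubarEps (pushKernel P K2) δ := by
      refine le_csInf ⟨L, hLmem 2 K2 hK2⟩ ?_
      rintro t ⟨ht0, htsum⟩
      by_contra hcon
      push_neg at hcon
      have hfil : Finset.univ.filter (fun z => pml (pushKernel P K2) z ≤ t)
          ⊆ {(0 : Fin 2)} := by
        intro z hz
        simp only [Finset.mem_filter, Finset.mem_univ, true_and] at hz
        have hz1 : z ≠ 1 := by
          intro h; rw [h] at hz; exact absurd hz (not_le.mpr hcon)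
        fin_cases z
        · exact Finset.mem_singleton_self _
        · exact absurd rfl hz1
      have hsum_le : ∑ z ∈ Finset.univ.filter (fun z => pml (pushKernel P K2) z ≤ t),
          margY (pushKernel P K2) z ≤ margY (pushKernel P K2) 0 := by
        calc _ ≤ ∑ z ∈ {(0 : Fin 2)}, margY (pushKernel P K2) z :=
            Finset.sum_le_sum_of_subset_of_nonneg hfil (fun z _ _ => hmynn z)
          _ = margY (pushKernel P K2) 0 := Finset.sum_singleton _ _
      have htot : margY (pushKernel P K2) 0 + margY (pushKernel P K2) 1 = 1 := by
        have h7 := htotal 2 K2 hK2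
        rwa [Fin.sum_univ_two] at h7
      linarith [hδq, hM1gt]
    have hmemS : ubarEps (pushKernel P K2) δ ∈ {e : ℝ | ∃ (n : ℕ)
        (K : Fin k → Fin n → ℝ), IsKernel K ∧ e = ubarEps (pushKernel P K) δ} :=
      ⟨2, K2, hK2, rfl⟩
    have h8 : ubarEps (pushKernel P K2) δ ≤ pmlEnvelope P δ :=
      le_csSup ⟨L, hbddS⟩ hmemS
    linarith [hw_lt, hles]
  have h2 : L ≤ pmlEnvelope P δ := le_of_forall_lt hlow
  exact le_antisymm h1 h2
end
end
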